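/- arXiv:math/0208135 — 6 statements merged into one kernel-verified Lean document; each statement's English description precedes it below -/
import Mathlib

section
/- Let (X,d) be a complete metric space. Suppose there exist 0 ≤ λ < 1/2 and L < ∞ such that for all u, v ∈ X there is a path of length at most L·d(u,v) connecting the ball B(u, λ·d(u,v)) to the ball B(v, λ·d(u,v)). Then X is quasi-convex: there is a constant L' (one may take L' = L/(1−2λ)) such that any two points x, y ∈ X are joined by a path of length at most L'·d(x,y). -/
open Metric Set MeasureTheory Filter Topology unitInterval
open scoped NNReal ENNReal

noncomputable section

/-- The length (total variation) of a continuous path. -/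
def pathLength {Z : Type*} [MetricSpace Z] (γ : C(unitInterval, Z)) : ℝ≥0∞ :=
  eVariationOn γ Set.univ

/-- The (real-valued) arclength function of a path. -/
def pathVar {Z : Type*} [MetricSpace Z] (γ : C(unitInterval, Z)) (t : ℝ) : ℝ :=
  (eVariationOn γ {s : unitInterval | (s : ℝ) ≤ t}).toReal

/-- The arclength (Stieltjes) measure on the parameter interval associated to a path. -/
def lengthMeasure {Z : Type*} [MetricSpace Z] (γ : C(unitInterval, Z)) :
    MeasureTheory.Measure ℝ :=
  letI := Classical.propDecidable (Monotone (pathVar γ))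
  if h : Monotone (pathVar γ) then h.stieltjesFunction.measure else 0

/-- The line integral `∫_γ ρ ds` of a density `ρ` along a path `γ` (with respect to
arclength). -/
def pathIntegral {Z : Type*} [MetricSpace Z] (ρ : Z → ℝ≥0∞) (γ : C(unitInterval, Z)) : ℝ≥0∞ :=
  ∫⁻ t, ρ (γ (Set.projIcc 0 1 zero_le_one t)) ∂(lengthMeasure γ)

/-- A density is admissible for a path family if every rectifiable path in the family has
`ρ`-length at least one. -/
def Admissible {Z : Type*} [MetricSpace Z] (ρ : Z → ℝ≥0∞) (Γ : Set C(unitInterval, Z)) : Prop :=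
  ∀ γ ∈ Γ, pathLength γ < ⊤ → 1 ≤ pathIntegral ρ γ

/-- The `Q`-modulus of a family of paths in `Z`. -/
def modulus {Z : Type*} [MetricSpace Z] [MeasurableSpace Z] (Q : ℝ) (μ : Measure Z)
    (Γ : Set C(unitInterval, Z)) : ℝ≥0∞ :=
  ⨅ (ρ : Z → ℝ≥0∞) (_ : Measurable ρ) (_ : Admissible ρ Γ), ∫⁻ z, ρ z ^ Q ∂μ

/-- A path is nonconstant if it takes at least two values. -/
def Nonconstant {Z : Type*} [MetricSpace Z] (γ : C(unitInterval, Z)) : Prop :=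
  ∃ s t, γ s ≠ γ t

/-- A measure `μ` on a metric space is Ahlfors `Q`-regular. -/
def AhlforsRegular {Z : Type*} [MetricSpace Z] [MeasurableSpace Z] (μ : Measure Z)
    (Q : ℝ) : Prop :=
  ∃ C : ℝ≥0, 1 ≤ C ∧ ∀ (a : Z) (R : ℝ), 0 < R →
    ENNReal.ofReal R ≤ EMetric.diam (Set.univ : Set Z) →
      ENNReal.ofReal (R ^ Q) / C ≤ μ (Metric.ball a R) ∧
      μ (Metric.ball a R) ≤ C * ENNReal.ofReal (R ^ Q)

/-- The metric cross-ratio of a four-tuple of points. -/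
def crossRatio {Z : Type*} [MetricSpace Z] (z₁ z₂ z₃ z₄ : Z) : ℝ≥0 :=
  (nndist z₁ z₃ * nndist z₂ z₄) / (nndist z₁ z₄ * nndist z₂ z₃)

/-- A map is `η`-quasi-Möbius if it distorts cross-ratios of distinct four-tuples in a way
controlled by the homeomorphism `η : [0,∞) → [0,∞)`. -/
def IsQuasiMobius {X Y : Type*} [MetricSpace X] [MetricSpace Y] (η : ℝ≥0 ≃ₜ ℝ≥0)
    (f : X → Y) : Prop :=
  ∀ x₁ x₂ x₃ x₄ : X, x₁ ≠ x₂ → x₁ ≠ x₃ → x₁ ≠ x₄ → x₂ ≠ x₃ → x₂ ≠ x₄ → x₃ ≠ x₄ →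
    crossRatio (f x₁) (f x₂) (f x₃) (f x₄) ≤ η (crossRatio x₁ x₂ x₃ x₄)

/-- A map is `η`-quasisymmetric. -/
def IsQuasisymmetric {X Y : Type*} [MetricSpace X] [MetricSpace Y] (η : ℝ≥0 ≃ₜ ℝ≥0)
    (f : X → Y) : Prop :=
  ∀ x₁ x₂ x₃ : X, x₁ ≠ x₂ → x₁ ≠ x₃ → x₂ ≠ x₃ →
    nndist (f x₁) (f x₂) / nndist (f x₁) (f x₃) ≤ η (nndist x₁ x₂ / nndist x₁ x₃)

/-- A metric space is Ahlfors `Q`-regular (with respect to `Q`-dimensional Hausdorff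
measure). -/
def AhlforsRegularSpace (Y : Type*) [MetricSpace Y] (Q : ℝ) : Prop :=
  letI : MeasurableSpace Y := borel Y
  haveI : BorelSpace Y := ⟨rfl⟩
  AhlforsRegular (μH[Q] : Measure Y) Q

/-- The Ahlfors regular conformal dimension of a metric space: the infimum of the Hausdorff
dimensions of all Ahlfors regular metric spaces quasisymmetrically homeomorphic to it. -/
def arConfDim (Z : Type u) [MetricSpace Z] : ℝ≥0∞ :=
  sInf { D : ℝ≥0∞ | ∃ (Y : Type u) (_ : MetricSpace Y) (Q' : ℝ) (η : ℝ≥0 ≃ₜ ℝ≥0) (f : Z ≃ₜ Y),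
      AhlforsRegularSpace Y Q' ∧ IsQuasisymmetric η f ∧ D = dimH (Set.univ : Set Y) }

/-- The distance between two subsets of a metric space, as an extended real. -/
def setSep {Z : Type*} [MetricSpace Z] (E F : Set Z) : ℝ≥0∞ :=
  ⨅ (x ∈ E) (y ∈ F), edist x y

/-- The relative distance `Δ(E,F) = dist(E,F)/min(diam E, diam F)` of two sets. -/
def relDist {Z : Type*} [MetricSpace Z] (E F : Set Z) : ℝ≥0∞ :=
  setSep E F / min (EMetric.diam E) (EMetric.diam F)

/-- The family of paths joining `E` to `F`. -/
def joinPaths {Z : Type*} [MetricSpace Z] (E F : Set Z) : Set C(unitInterval, Z) :=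
  {γ | γ 0 ∈ E ∧ γ 1 ∈ F}

/-- A metric measure space is `Q`-Loewner if it is connected and the `Q`-modulus of the family
of paths joining two disjoint nondegenerate continua is bounded below by a positive decreasing
function of their relative distance. -/
def IsLoewner (Z : Type*) [MetricSpace Z] [MeasurableSpace Z] (Q : ℝ) (μ : Measure Z) : Prop :=
  ConnectedSpace Z ∧
  ∃ Ψ : ℝ≥0∞ → ℝ≥0∞, Antitone Ψ ∧ (∀ t, t ≠ 0 → t ≠ ⊤ → 0 < Ψ t) ∧
    ∀ E F : Set Z, IsCompact E → IsConnected E → E.Nontrivial →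
      IsCompact F → IsConnected F → F.Nontrivial → Disjoint E F →
      Ψ (relDist E F) ≤ modulus Q μ (joinPaths E F)

/-- A path is thick if every neighborhood of it in `C([0,1],Z)` contains a family of
nonconstant paths of positive `Q`-modulus. -/
def IsThick {Z : Type*} [MetricSpace Z] [MeasurableSpace Z] (Q : ℝ) (μ : Measure Z)
    (γ : C(unitInterval, Z)) : Prop :=
  ∀ ε : ℝ, 0 < ε → 0 < modulus Q μ {α | α ∈ Metric.ball γ ε ∧ Nonconstant α}

end

set_option linter.unusedSectionVars false

namespace QCAux

variable {X : Type*} [MetricSpace X]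

noncomputable def approx (P : X → X → ℝ → X) : ℕ → X → X → ℝ → X
  | 0, u, v, t => if t < 1 then u else v
  | (n+1), u, v, t =>
      if t < 1/3 then approx P n u (P u v 0) (3*t)
      else if t < 2/3 then P u v (3*t - 1)
      else approx P n (P u v 1) v (3*t - 2)

variable {P : X → X → ℝ → X}

lemma approx_nonpos (n : ℕ) (u v : X) {t : ℝ} (h : t ≤ 0) : approx P n u v t = u := by
  induction n generalizing u v t with
  | zero => simp only [approx, if_pos (by linarith : t < 1)]
  | succ n ih =>
      simp only [approx, if_pos (by linarith : t < 1/3)]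
      exact ih _ _ (by linarith)

lemma approx_one_le (n : ℕ) (u v : X) {t : ℝ} (h : 1 ≤ t) : approx P n u v t = v := by
  induction n generalizing u v t with
  | zero => simp only [approx, if_neg (by linarith : ¬ t < 1)]
  | succ n ih =>
      simp only [approx, if_neg (by linarith : ¬ t < 1/3), if_neg (by linarith : ¬ t < 2/3)]
      exact ih _ _ (by linarith)

/-- variation of a two-valued step function -/
lemma evar_step (u v : X) (c : ℝ) (s : Set ℝ) :
    eVariationOn (fun t => if t < c then u else v) s ≤ edist u v := by
  apply iSup_le
  rintro ⟨m, w, hw, hws⟩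
  by_cases hne : ∃ i < m, w i < c ∧ ¬ w (i+1) < c
  · obtain ⟨j, hj, hj1, hj2⟩ := hne
    have : ∀ i ∈ Finset.range m,
        edist ((fun t => if t < c then u else v) (w (i+1)))
          ((fun t => if t < c then u else v) (w i)) ≤ if i = j then edist u v else 0 := by
      intro i hi
      simp only [Finset.mem_range] at hi
      by_cases hij : i = j
      · subst hij
        simp only [if_pos, if_neg hj2, if_pos hj1, edist_comm, le_refl]
      · simp only [if_neg hij]
        by_cases h1 : w i < c
        · have h2 : w (i+1) < c := by
            by_contra h2
            rcases lt_or_gt_of_ne hij with hlt | hgt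
            · exact absurd (hw (Nat.succ_le_of_lt hlt) : w (i+1) ≤ w j)
                (not_le.2 (lt_of_lt_of_le hj1 (not_lt.1 h2)))
            · exact absurd (hw (Nat.succ_le_of_lt hgt) : w (j+1) ≤ w i)
                (not_le.2 (lt_of_lt_of_le h1 (not_lt.1 hj2)))
          simp [if_pos h1, if_pos h2]
        · have h2 : ¬ w (i+1) < c := fun hc => h1 (lt_of_le_of_lt (hw (Nat.le_succ i)) hc)
          simp [if_neg h1, if_neg h2]
    calc _ ≤ ∑ i ∈ Finset.range m, if i = j then edist u v else 0 := Finset.sum_le_sum this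
    _ = edist u v := by rw [Finset.sum_ite_eq' (Finset.range m) j]; simp [Finset.mem_range.2 hj]
  · push_neg at hne
    have : ∀ i ∈ Finset.range m,
        edist ((fun t => if t < c then u else v) (w (i+1)))
          ((fun t => if t < c then u else v) (w i)) = 0 := by
      intro i hi
      simp only [Finset.mem_range] at hi
      by_cases h1 : w i < c
      · have h2 := hne i hi h1
        simp [if_pos h1, if_pos h2]
      · have h2 : ¬ w (i+1) < c := fun hc => h1 (lt_of_le_of_lt (hw (Nat.le_succ i)) hc)
        simp [if_neg h1, if_neg h2]
    rw [Finset.sum_congr rfl this]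
    simp


lemma approx_succ_left (n : ℕ) (u v : X) {t : ℝ} (h : t < 1/3) :
    approx P (n+1) u v t = approx P n u (P u v 0) (3*t) := by
  simp only [approx, if_pos h]

lemma approx_succ_mid (n : ℕ) (u v : X) {t : ℝ} (h1 : ¬ t < 1/3) (h2 : t < 2/3) :
    approx P (n+1) u v t = P u v (3*t - 1) := by
  simp only [approx, if_neg h1, if_pos h2]

lemma approx_succ_right (n : ℕ) (u v : X) {t : ℝ} (h2 : ¬ t < 2/3) :
    approx P (n+1) u v t = approx P n (P u v 1) v (3*t - 2) := by
  have h1 : ¬ t < 1/3 := fun h => h2 (by linarith)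
  simp only [approx, if_neg h1, if_neg h2]

section Est

variable {lam L B : ℝ}
  (hlam0 : 0 ≤ lam) (hlam1 : lam ≤ 1) (hL : 0 ≤ L)
  (hB1 : 1 ≤ B) (hB2 : lam + L ≤ B) (hB3 : B * lam + lam + 1 ≤ B)
  (hPa : ∀ u v : X, dist (P u v 0) u ≤ lam * dist u v)
  (hPb : ∀ u v : X, dist (P u v 1) v ≤ lam * dist u v)
  (hPvar : ∀ u v : X, eVariationOn (P u v) (Icc 0 1) ≤ ENNReal.ofReal (L * dist u v))

include hPvar hL in
lemma P_dist_left (u v : X) {s : ℝ} (hs : s ∈ Icc (0:ℝ) 1) :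
    dist (P u v s) (P u v 0) ≤ L * dist u v := by
  have h1 : edist (P u v s) (P u v 0) ≤ ENNReal.ofReal (L * dist u v) :=
    (eVariationOn.edist_le (P u v) hs (by constructor <;> norm_num)).trans (hPvar u v)
  have h2 : ENNReal.ofReal (L * dist u v) ≠ ⊤ := ENNReal.ofReal_ne_top
  have := ENNReal.toReal_mono h2 h1
  rwa [edist_dist, ENNReal.toReal_ofReal dist_nonneg,
    ENNReal.toReal_ofReal (by positivity)] at this

include hPvar hL in
lemma P_dist_right (u v : X) {s : ℝ} (hs : s ∈ Icc (0:ℝ) 1) :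
    dist (P u v s) (P u v 1) ≤ L * dist u v := by
  have h1 : edist (P u v s) (P u v 1) ≤ ENNReal.ofReal (L * dist u v) :=
    (eVariationOn.edist_le (P u v) hs (by constructor <;> norm_num)).trans (hPvar u v)
  have h2 : ENNReal.ofReal (L * dist u v) ≠ ⊤ := ENNReal.ofReal_ne_top
  have := ENNReal.toReal_mono h2 h1
  rwa [edist_dist, ENNReal.toReal_ofReal dist_nonneg,
    ENNReal.toReal_ofReal (by positivity)] at this

include hlam0 hlam1 hL hB1 hB2 hB3 hPa hPb hPvar in
lemma approx_dist_bound (n : ℕ) (u v : X) (t : ℝ) :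
    dist (approx P n u v t) u ≤ B * dist u v := by
  induction n generalizing u v t with
  | zero =>
      simp only [approx]
      split_ifs with h
      · simpa using (by positivity : (0:ℝ) ≤ B * dist u v)
      · calc dist v u = dist u v := dist_comm v u
          _ ≤ B * dist u v := le_mul_of_one_le_left dist_nonneg hB1
  | succ n ih =>
      have hd0 : dist u (P u v 0) ≤ lam * dist u v := by
        rw [dist_comm]; exact hPa u v
      have hd1 : dist (P u v 1) v ≤ lam * dist u v := hPb u v
      simp only [approx]
      split_ifs with h1 h2
      · calc dist (approx P n u (P u v 0) (3*t)) u ≤ B * dist u (P u v 0) := ih _ _ _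
          _ ≤ B * (lam * dist u v) := by
              apply mul_le_mul_of_nonneg_left hd0 (by linarith)
          _ ≤ B * dist u v := by nlinarith [dist_nonneg (x := u) (y := v)]
      · have hs : (3*t - 1) ∈ Icc (0:ℝ) 1 := ⟨by linarith [not_lt.1 h1], by linarith⟩
        calc dist (P u v (3*t-1)) u
            ≤ dist (P u v (3*t-1)) (P u v 0) + dist (P u v 0) u := dist_triangle _ _ _
          _ ≤ L * dist u v + lam * dist u v := by
              gcongr
              · exact P_dist_left hL hPvar u v hs
              · exact hPa u v
          _ ≤ B * dist u v := by nlinarith [dist_nonneg (x := u) (y := v)]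
      · calc dist (approx P n (P u v 1) v (3*t-2)) u
            ≤ dist (approx P n (P u v 1) v (3*t-2)) (P u v 1) + dist (P u v 1) v + dist v u := by
              have := dist_triangle4 (approx P n (P u v 1) v (3*t-2)) (P u v 1) v u
              linarith [this]
          _ ≤ B * dist (P u v 1) v + lam * dist u v + dist u v := by
              rw [dist_comm v u]; gcongr; exact ih _ _ _
          _ ≤ B * (lam * dist u v) + lam * dist u v + dist u v := by
              apply add_le_add_left; apply add_le_add_left
              apply mul_le_mul_of_nonneg_left hd1 (by linarith)
          _ ≤ B * dist u v := by nlinarith [dist_nonneg (x := u) (y := v)]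

include hlam0 hlam1 hL hB1 hB2 hB3 hPa hPb hPvar in
lemma approx_cauchy_step (n : ℕ) (u v : X) (t : ℝ) :
    dist (approx P n u v t) (approx P (n+1) u v t) ≤ (B+1) * lam^n * dist u v := by
  induction n generalizing u v t with
  | zero =>
      have h1 : dist (approx P 0 u v t) u ≤ dist u v := by
        simp only [approx]; split_ifs
        · simp [dist_nonneg]
        · rw [dist_comm]
      calc dist (approx P 0 u v t) (approx P 1 u v t)
          ≤ dist (approx P 0 u v t) u + dist (approx P 1 u v t) u := by
            rw [dist_comm (approx P 1 u v t) u]; exact dist_triangle _ _ _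
        _ ≤ dist u v + B * dist u v :=
            add_le_add h1 (approx_dist_bound hlam0 hlam1 hL hB1 hB2 hB3 hPa hPb hPvar 1 u v t)
        _ = (B+1) * lam^0 * dist u v := by ring
  | succ n ih =>
      have hd0 : dist u (P u v 0) ≤ lam * dist u v := by rw [dist_comm]; exact hPa u v
      have hd1 : dist (P u v 1) v ≤ lam * dist u v := hPb u v
      have hBp : 0 ≤ (B+1) * lam^n := by positivity
      rcases lt_or_ge t (1/3) with h1 | h1
      · rw [approx_succ_left n u v h1, approx_succ_left (n+1) u v h1]
        calc dist (approx P n u (P u v 0) (3*t)) (approx P (n+1) u (P u v 0) (3*t))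
            ≤ (B+1) * lam^n * dist u (P u v 0) := ih _ _ _
          _ ≤ (B+1) * lam^n * (lam * dist u v) := mul_le_mul_of_nonneg_left hd0 hBp
          _ = (B+1) * lam^(n+1) * dist u v := by ring
      · rcases lt_or_ge t (2/3) with h2 | h2
        · rw [approx_succ_mid n u v (not_lt.2 h1) h2, approx_succ_mid (n+1) u v (not_lt.2 h1) h2]
          simp only [dist_self]
          positivity
        · rw [approx_succ_right n u v (not_lt.2 h2), approx_succ_right (n+1) u v (not_lt.2 h2)]
          calc dist (approx P n (P u v 1) v (3*t-2)) (approx P (n+1) (P u v 1) v (3*t-2))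
              ≤ (B+1) * lam^n * dist (P u v 1) v := ih _ _ _
            _ ≤ (B+1) * lam^n * (lam * dist u v) := mul_le_mul_of_nonneg_left hd1 hBp
            _ = (B+1) * lam^(n+1) * dist u v := by ring

end Est

lemma image_affine3 (k p q : ℝ) (hpq : p ≤ q) :
    (fun t : ℝ => 3*t - k) '' Icc p q = Icc (3*p - k) (3*q - k) := by
  have h : (fun t : ℝ => 3*t - k) = (fun s : ℝ => s - k) ∘ (fun t : ℝ => 3*t) := rfl
  rw [h, image_comp, image_mul_left_Icc' (by norm_num : (0:ℝ) < 3) p q, image_sub_const_Icc]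

def Tseq (L lam : ℝ) : ℕ → ℝ
  | 0 => 1
  | (n+1) => L + 2*lam*(Tseq L lam n)

lemma Tseq_nonneg {L lam : ℝ} (hL : 0 ≤ L) (hlam0 : 0 ≤ lam) : ∀ n, 0 ≤ Tseq L lam n
  | 0 => by norm_num [Tseq]
  | (n+1) => by
      have := Tseq_nonneg hL hlam0 n
      simp only [Tseq]; positivity

lemma Tseq_le {L lam c : ℝ} (hlam0 : 0 ≤ lam) (hc : 1 ≤ c) (hfix : L + 2*lam*c = c) :
    ∀ n, Tseq L lam n ≤ c
  | 0 => hc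
  | (n+1) => by
      have := Tseq_le hlam0 hc hfix n
      simp only [Tseq]
      nlinarith

section Var

variable {lam L : ℝ}
  (hlam0 : 0 ≤ lam) (hL : 0 ≤ L)
  (hPa : ∀ u v : X, dist (P u v 0) u ≤ lam * dist u v)
  (hPb : ∀ u v : X, dist (P u v 1) v ≤ lam * dist u v)
  (hPvar : ∀ u v : X, eVariationOn (P u v) (Icc 0 1) ≤ ENNReal.ofReal (L * dist u v))

include hlam0 hL hPa hPb hPvar in
lemma approx_evar (n : ℕ) (u v : X) :
    eVariationOn (approx P n u v) (Icc 0 1) ≤ ENNReal.ofReal (Tseq L lam n * dist u v) := by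
  induction n generalizing u v with
  | zero =>
      have e0 : EqOn (approx P 0 u v) (fun t : ℝ => if t < 1 then u else v) (Icc 0 1) := by
        intro t _; simp only [approx]
      rw [eVariationOn.eq_of_eqOn e0]
      refine (evar_step u v 1 (Icc 0 1)).trans ?_
      rw [edist_dist]
      simp [Tseq]
  | succ n ih =>
      set g := approx P (n+1) u v with hg
      have hd0 : dist u (P u v 0) ≤ lam * dist u v := by rw [dist_comm]; exact hPa u v
      have hd1 : dist (P u v 1) v ≤ lam * dist u v := hPb u v
      have hTn := Tseq_nonneg hL hlam0 (L := L) (lam := lam) n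
      have comb : eVariationOn g (Icc (0:ℝ) (1/3)) + eVariationOn g (Icc (1/3) (2/3))
          + eVariationOn g (Icc (2/3) 1) = eVariationOn g (Icc 0 1) := by
        have h1 := eVariationOn.Icc_add_Icc g (s := (univ : Set ℝ))
          (by norm_num : (0:ℝ) ≤ 1/3) (by norm_num : (1:ℝ)/3 ≤ 2/3) (mem_univ _)
        have h2 := eVariationOn.Icc_add_Icc g (s := (univ : Set ℝ))
          (by norm_num : (0:ℝ) ≤ 2/3) (by norm_num : (2:ℝ)/3 ≤ 1) (mem_univ _)
        simp only [univ_inter] at h1 h2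
        rw [h1, h2]
      have left : eVariationOn g (Icc (0:ℝ) (1/3))
          ≤ ENNReal.ofReal (Tseq L lam n * (lam * dist u v)) := by
        have e1 : EqOn g ((approx P n u (P u v 0)) ∘ (fun t : ℝ => 3*t)) (Icc 0 (1/3)) := by
          intro t ht
          rcases lt_or_eq_of_le ht.2 with h | h
          · exact approx_succ_left n u v h
          · have h3 : ¬ t < 1/3 := by rw [h]; exact lt_irrefl _
            rw [hg, approx_succ_mid n u v h3 (by rw [h]; norm_num)]
            have : (3:ℝ)*t - 1 = 0 := by rw [h]; norm_num
            rw [this]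
            have : (3:ℝ)*t = 1 := by rw [h]; norm_num
            simp only [Function.comp_apply, this]
            rw [approx_one_le n u (P u v 0) le_rfl]
        rw [eVariationOn.eq_of_eqOn e1,
          eVariationOn.comp_eq_of_monotoneOn _ _
            (fun a _ b _ hab => by dsimp; linarith : MonotoneOn (fun t : ℝ => 3*t) (Icc 0 (1/3)))]
        have himg : (fun t : ℝ => 3*t) '' Icc 0 (1/3) = Icc 0 1 := by
          rw [image_mul_left_Icc' (by norm_num : (0:ℝ) < 3)]; norm_num
        rw [himg]
        refine (ih u (P u v 0)).trans ?_
        exact ENNReal.ofReal_le_ofReal (mul_le_mul_of_nonneg_left hd0 hTn)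
      have mid : eVariationOn g (Icc ((1:ℝ)/3) (2/3)) ≤ ENNReal.ofReal (L * dist u v) := by
        have e2 : EqOn g ((P u v) ∘ (fun t : ℝ => 3*t - 1)) (Icc (1/3) (2/3)) := by
          intro t ht
          rcases lt_or_eq_of_le ht.2 with h | h
          · exact approx_succ_mid n u v (not_lt.2 ht.1) h
          · have h3 : ¬ t < 2/3 := by rw [h]; exact lt_irrefl _
            rw [hg, approx_succ_right n u v h3]
            have h4 : (3:ℝ)*t - 2 = 0 := by rw [h]; norm_num
            have h5 : (3:ℝ)*t - 1 = 1 := by rw [h]; norm_num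
            rw [h4, approx_nonpos n (P u v 1) v le_rfl]
            simp only [Function.comp_apply, h5]
        rw [eVariationOn.eq_of_eqOn e2,
          eVariationOn.comp_eq_of_monotoneOn _ _
            (fun a _ b _ hab => by dsimp; linarith :
              MonotoneOn (fun t : ℝ => 3*t - 1) (Icc (1/3) (2/3)))]
        have himg : (fun t : ℝ => 3*t - 1) '' Icc ((1:ℝ)/3) (2/3) = Icc 0 1 := by
          rw [image_affine3 1 (1/3) (2/3) (by norm_num)]; norm_num
        rw [himg]
        exact hPvar u v
      have right : eVariationOn g (Icc ((2:ℝ)/3) 1)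
          ≤ ENNReal.ofReal (Tseq L lam n * (lam * dist u v)) := by
        have e3 : EqOn g ((approx P n (P u v 1) v) ∘ (fun t : ℝ => 3*t - 2)) (Icc (2/3) 1) := by
          intro t ht
          exact approx_succ_right n u v (not_lt.2 ht.1)
        rw [eVariationOn.eq_of_eqOn e3,
          eVariationOn.comp_eq_of_monotoneOn _ _
            (fun a _ b _ hab => by dsimp; linarith :
              MonotoneOn (fun t : ℝ => 3*t - 2) (Icc (2/3) 1))]
        have himg : (fun t : ℝ => 3*t - 2) '' Icc ((2:ℝ)/3) 1 = Icc 0 1 := by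
          rw [image_affine3 2 (2/3) 1 (by norm_num)]; norm_num
        rw [himg]
        refine (ih (P u v 1) v).trans ?_
        exact ENNReal.ofReal_le_ofReal (mul_le_mul_of_nonneg_left hd1 hTn)
      rw [← comb]
      calc eVariationOn g (Icc (0:ℝ) (1/3)) + eVariationOn g (Icc (1/3) (2/3))
            + eVariationOn g (Icc (2/3) 1)
          ≤ ENNReal.ofReal (Tseq L lam n * (lam * dist u v)) + ENNReal.ofReal (L * dist u v)
            + ENNReal.ofReal (Tseq L lam n * (lam * dist u v)) := by
            gcongr
        _ = ENNReal.ofReal (Tseq L lam n * (lam * dist u v) + L * dist u v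
            + Tseq L lam n * (lam * dist u v)) := by
            rw [← ENNReal.ofReal_add (by positivity) (by positivity),
              ← ENNReal.ofReal_add (by positivity) (by positivity)]
        _ = ENNReal.ofReal (Tseq L lam (n+1) * dist u v) := by
            congr 1
            simp only [Tseq]
            ring

end Var

noncomputable def qlim (P : X → X → ℝ → X) (u v : X) (t : ℝ) : X :=
  letI : Nonempty X := ⟨u⟩
  limUnder atTop (fun n => approx P n u v t)

section Lim

variable [CompleteSpace X]
variable {lam L B : ℝ}
  (hlam0 : 0 ≤ lam) (hlam1 : lam ≤ 1) (hlamlt : lam < 1) (hL : 0 ≤ L)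
  (hB1 : 1 ≤ B) (hB2 : lam + L ≤ B) (hB3 : B * lam + lam + 1 ≤ B)
  (hPa : ∀ u v : X, dist (P u v 0) u ≤ lam * dist u v)
  (hPb : ∀ u v : X, dist (P u v 1) v ≤ lam * dist u v)
  (hPvar : ∀ u v : X, eVariationOn (P u v) (Icc 0 1) ≤ ENNReal.ofReal (L * dist u v))

include hlam0 hlam1 hlamlt hL hB1 hB2 hB3 hPa hPb hPvar

lemma tendsto_qlim (u v : X) (t : ℝ) :
    Tendsto (fun n => approx P n u v t) atTop (𝓝 (qlim P u v t)) := by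
  letI : Nonempty X := ⟨u⟩
  have hc : CauchySeq (fun n => approx P n u v t) := by
    apply cauchySeq_of_le_geometric lam ((B+1) * dist u v) hlamlt
    intro n
    have := approx_cauchy_step hlam0 hlam1 hL hB1 hB2 hB3 hPa hPb hPvar n u v t
    calc dist (approx P n u v t) (approx P (n+1) u v t) ≤ (B+1) * lam^n * dist u v := this
      _ = (B+1) * dist u v * lam^n := by ring
  exact hc.tendsto_limUnder

lemma qlim_nonpos (u v : X) {t : ℝ} (h : t ≤ 0) : qlim P u v t = u := by
  refine tendsto_nhds_unique (tendsto_qlim hlam0 hlam1 hlamlt hL hB1 hB2 hB3 hPa hPb hPvar u v t)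
    ?_
  have : (fun n => approx P n u v t) = fun _ => u := funext fun n => approx_nonpos n u v h
  rw [this]; exact tendsto_const_nhds

lemma qlim_one_le (u v : X) {t : ℝ} (h : 1 ≤ t) : qlim P u v t = v := by
  refine tendsto_nhds_unique (tendsto_qlim hlam0 hlam1 hlamlt hL hB1 hB2 hB3 hPa hPb hPvar u v t)
    ?_
  have : (fun n => approx P n u v t) = fun _ => v := funext fun n => approx_one_le n u v h
  rw [this]; exact tendsto_const_nhds

lemma qlim_dist_bound (u v : X) (t : ℝ) : dist (qlim P u v t) u ≤ B * dist u v := by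
  refine le_of_tendsto
    (((tendsto_qlim hlam0 hlam1 hlamlt hL hB1 hB2 hB3 hPa hPb hPvar u v t)).dist
      tendsto_const_nhds) (Eventually.of_forall fun n =>
        approx_dist_bound hlam0 hlam1 hL hB1 hB2 hB3 hPa hPb hPvar n u v t)

lemma qlim_succ_eq (u v : X) (t : ℝ) :
    Tendsto (fun n => approx P (n+1) u v t) atTop (𝓝 (qlim P u v t)) :=
  (tendsto_qlim hlam0 hlam1 hlamlt hL hB1 hB2 hB3 hPa hPb hPvar u v t).comp
    (tendsto_add_atTop_nat 1)

lemma qlim_left (u v : X) {t : ℝ} (h : t ≤ 1/3) :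
    qlim P u v t = qlim P u (P u v 0) (3*t) := by
  have e : ∀ n, approx P (n+1) u v t = approx P n u (P u v 0) (3*t) := by
    intro n
    rcases lt_or_eq_of_le h with h' | h'
    · exact approx_succ_left n u v h'
    · rw [approx_succ_mid n u v (by rw [h']; exact lt_irrefl _) (by rw [h']; norm_num)]
      rw [approx_one_le n u (P u v 0) (by rw [h']; norm_num)]
      congr 1
      rw [h']; norm_num
  refine tendsto_nhds_unique ?_
    (tendsto_qlim hlam0 hlam1 hlamlt hL hB1 hB2 hB3 hPa hPb hPvar u (P u v 0) (3*t))
  have := qlim_succ_eq hlam0 hlam1 hlamlt hL hB1 hB2 hB3 hPa hPb hPvar u v t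
  rwa [funext e] at this

lemma qlim_mid (u v : X) {t : ℝ} (h1 : 1/3 ≤ t) (h2 : t ≤ 2/3) :
    qlim P u v t = P u v (3*t - 1) := by
  have e : ∀ n, approx P (n+1) u v t = P u v (3*t - 1) := by
    intro n
    rcases lt_or_eq_of_le h2 with h' | h'
    · exact approx_succ_mid n u v (not_lt.2 h1) h'
    · rw [approx_succ_right n u v (by rw [h']; exact lt_irrefl _)]
      rw [approx_nonpos n (P u v 1) v (by rw [h']; norm_num : 3*t - 2 ≤ 0)]
      congr 1
      rw [h']; norm_num
  have h := qlim_succ_eq hlam0 hlam1 hlamlt hL hB1 hB2 hB3 hPa hPb hPvar u v t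
  rw [funext e] at h
  exact tendsto_nhds_unique h tendsto_const_nhds

lemma qlim_right (u v : X) {t : ℝ} (h : 2/3 ≤ t) :
    qlim P u v t = qlim P (P u v 1) v (3*t - 2) := by
  have e : ∀ n, approx P (n+1) u v t = approx P n (P u v 1) v (3*t - 2) := fun n =>
    approx_succ_right n u v (not_lt.2 h)
  refine tendsto_nhds_unique ?_
    (tendsto_qlim hlam0 hlam1 hlamlt hL hB1 hB2 hB3 hPa hPb hPvar (P u v 1) v (3*t - 2))
  have := qlim_succ_eq hlam0 hlam1 hlamlt hL hB1 hB2 hB3 hPa hPb hPvar u v t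
  rwa [funext e] at this

variable (hPc : ∀ u v : X, Continuous (P u v))

include hPc in
lemma qlim_osc : ∀ (k : ℕ) (u v : X) (t : ℝ) {ε : ℝ}, 0 < ε →
    ∃ δ > 0, ∀ s : ℝ, |s - t| < δ →
      dist (qlim P u v s) (qlim P u v t) ≤ ε + 2*B*lam^k*dist u v := by
  intro k
  induction k with
  | zero =>
      intro u v t ε hε
      refine ⟨1, one_pos, fun s _ => ?_⟩
      have h1 := qlim_dist_bound hlam0 hlam1 hlamlt hL hB1 hB2 hB3 hPa hPb hPvar u v s
      have h2 := qlim_dist_bound hlam0 hlam1 hlamlt hL hB1 hB2 hB3 hPa hPb hPvar u v t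
      have h3 := dist_triangle_right (qlim P u v s) (qlim P u v t) u
      have h4 : dist (qlim P u v t) u ≤ B * dist u v := h2
      simp only [pow_zero]
      linarith
  | succ k ih =>
      intro u v t ε hε
      have hd : (0:ℝ) ≤ dist u v := dist_nonneg
      have hd0 : dist u (P u v 0) ≤ lam * dist u v := by rw [dist_comm]; exact hPa u v
      have hd1 : dist (P u v 1) v ≤ lam * dist u v := hPb u v
      have hBp : (0:ℝ) ≤ 2*B*lam^k := by positivity
      rcases lt_or_ge t (1/3) with ht | ht
      · obtain ⟨δ', hδ', hIH⟩ := ih u (P u v 0) (3*t) hε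
        refine ⟨min (δ'/3) (1/3 - t), lt_min (by linarith) (by linarith), fun s hs => ?_⟩
        have hs1 : s < 1/3 := by
          have := abs_lt.1 (lt_of_lt_of_le hs (min_le_right _ _))
          linarith [this.2]
        rw [qlim_left hlam0 hlam1 hlamlt hL hB1 hB2 hB3 hPa hPb hPvar u v hs1.le,
          qlim_left hlam0 hlam1 hlamlt hL hB1 hB2 hB3 hPa hPb hPvar u v ht.le]
        have harg : |3*s - 3*t| < δ' := by
          have h3 : |s - t| < δ'/3 := lt_of_lt_of_le hs (min_le_left _ _)
          have h4 : 3*s - 3*t = 3 * (s - t) := by ring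
          rw [h4, abs_mul, abs_of_nonneg (by norm_num : (0:ℝ) ≤ 3)]; linarith
        refine (hIH _ harg).trans ?_
        have : 2*B*lam^k * dist u (P u v 0) ≤ 2*B*lam^(k+1) * dist u v := by
          calc 2*B*lam^k * dist u (P u v 0) ≤ 2*B*lam^k * (lam * dist u v) := by
                exact mul_le_mul_of_nonneg_left hd0 hBp
            _ = 2*B*lam^(k+1) * dist u v := by ring
        linarith
      · rcases lt_or_ge (2/3 : ℝ) t with ht2 | ht2
        · obtain ⟨δ', hδ', hIH⟩ := ih (P u v 1) v (3*t - 2) hε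
          refine ⟨min (δ'/3) (t - 2/3), lt_min (by linarith) (by linarith), fun s hs => ?_⟩
          have hs1 : 2/3 < s := by
            have := abs_lt.1 (lt_of_lt_of_le hs (min_le_right _ _))
            linarith [this.1]
          rw [qlim_right hlam0 hlam1 hlamlt hL hB1 hB2 hB3 hPa hPb hPvar u v hs1.le,
            qlim_right hlam0 hlam1 hlamlt hL hB1 hB2 hB3 hPa hPb hPvar u v ht2.le]
          have harg : |(3*s - 2) - (3*t - 2)| < δ' := by
            have h3 : |s - t| < δ'/3 := lt_of_lt_of_le hs (min_le_left _ _)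
            have : |(3*s - 2) - (3*t - 2)| = 3 * |s - t| := by
              have h4 : (3*s - 2) - (3*t - 2) = 3 * (s - t) := by ring
              rw [h4, abs_mul, abs_of_nonneg (by norm_num : (0:ℝ) ≤ 3)]
            rw [this]; linarith
          refine (hIH _ harg).trans ?_
          have : 2*B*lam^k * dist (P u v 1) v ≤ 2*B*lam^(k+1) * dist u v := by
            calc 2*B*lam^k * dist (P u v 1) v ≤ 2*B*lam^k * (lam * dist u v) := by
                  exact mul_le_mul_of_nonneg_left hd1 hBp
              _ = 2*B*lam^(k+1) * dist u v := by ring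
          linarith
        · -- middle case : 1/3 ≤ t ≤ 2/3
          obtain ⟨δ₁, hδ₁, hIH₁⟩ := ih u (P u v 0) 1 (half_pos hε)
          obtain ⟨δ₂, hδ₂, hIH₂⟩ := ih (P u v 1) v 0 (half_pos hε)
          obtain ⟨δ₀, hδ₀, hP₀⟩ := Metric.continuous_iff.mp (hPc u v) (3*t - 1) ε hε
          obtain ⟨δ₃, hδ₃, hP₃⟩ := Metric.continuous_iff.mp (hPc u v) 0 (ε/2) (half_pos hε)
          obtain ⟨δ₄, hδ₄, hP₄⟩ := Metric.continuous_iff.mp (hPc u v) 1 (ε/2) (half_pos hε)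
          refine ⟨min (min (δ₀/3) (δ₁/3)) (min (min (δ₂/3) (δ₃/3)) (δ₄/3)),
            lt_min (lt_min (by linarith) (by linarith))
              (lt_min (lt_min (by linarith) (by linarith)) (by linarith)), fun s hs => ?_⟩
          have hs0 : |s - t| < δ₀/3 :=
            lt_of_lt_of_le hs ((min_le_left _ _).trans (min_le_left _ _))
          have hsd1 : |s - t| < δ₁/3 :=
            lt_of_lt_of_le hs ((min_le_left _ _).trans (min_le_right _ _))
          have hsd2 : |s - t| < δ₂/3 :=
            lt_of_lt_of_le hs ((min_le_right _ _).trans ((min_le_left _ _).trans (min_le_left _ _)))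
          have hsd3 : |s - t| < δ₃/3 :=
            lt_of_lt_of_le hs
              ((min_le_right _ _).trans ((min_le_left _ _).trans (min_le_right _ _)))
          have hsd4 : |s - t| < δ₄/3 :=
            lt_of_lt_of_le hs ((min_le_right _ _).trans (min_le_right _ _))
          have habs := abs_lt.1 hs0
          rw [qlim_mid hlam0 hlam1 hlamlt hL hB1 hB2 hB3 hPa hPb hPvar u v ht ht2]
          rcases lt_or_ge s (1/3) with hcs | hcs
          · -- spill left
            have hts : t - 1/3 ≤ |s - t| := by
              rw [abs_sub_comm, abs_of_nonneg (by linarith)]; linarith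
            have hss : 1/3 - s ≤ |s - t| := by
              rw [abs_sub_comm, abs_of_nonneg (by linarith)]; linarith
            rw [qlim_left hlam0 hlam1 hlamlt hL hB1 hB2 hB3 hPa hPb hPvar u v hcs.le]
            have hq1 : qlim P u (P u v 0) 1 = P u v 0 :=
              qlim_one_le hlam0 hlam1 hlamlt hL hB1 hB2 hB3 hPa hPb hPvar u (P u v 0) le_rfl
            have step1 : dist (qlim P u (P u v 0) (3*s)) (P u v 0)
                ≤ ε/2 + 2*B*lam^k * dist u (P u v 0) := by
              have h7 := hIH₁ (3*s) (by
                rw [abs_sub_comm, abs_of_nonneg (by linarith)]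
                linarith [hss.trans_lt hsd1])
              rwa [hq1] at h7
            have step2 : dist (P u v (3*t - 1)) (P u v 0) < ε/2 := by
              apply hP₃
              rw [Real.dist_eq, sub_zero, abs_of_nonneg (by linarith : (0:ℝ) ≤ 3*t - 1)]
              linarith [hts.trans_lt hsd3]
            have htri := dist_triangle_right (qlim P u (P u v 0) (3*s)) (P u v (3*t-1)) (P u v 0)
            have hmul : 2*B*lam^k * dist u (P u v 0) ≤ 2*B*lam^(k+1) * dist u v := by
              calc 2*B*lam^k * dist u (P u v 0) ≤ 2*B*lam^k * (lam * dist u v) :=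
                    mul_le_mul_of_nonneg_left hd0 hBp
                _ = 2*B*lam^(k+1) * dist u v := by ring
            linarith
          · rcases lt_or_ge (2/3 : ℝ) s with hcs2 | hcs2
            · -- spill right
              have hts : 2/3 - t ≤ |s - t| := by
                rw [abs_of_nonneg (by linarith)]; linarith
              have hss : s - 2/3 ≤ |s - t| := by
                rw [abs_of_nonneg (by linarith)]; linarith
              rw [qlim_right hlam0 hlam1 hlamlt hL hB1 hB2 hB3 hPa hPb hPvar u v hcs2.le]
              have hq1 : qlim P (P u v 1) v 0 = P u v 1 :=
                qlim_nonpos hlam0 hlam1 hlamlt hL hB1 hB2 hB3 hPa hPb hPvar (P u v 1) v le_rfl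
              have step1 : dist (qlim P (P u v 1) v (3*s - 2)) (P u v 1)
                  ≤ ε/2 + 2*B*lam^k * dist (P u v 1) v := by
                have h7 := hIH₂ (3*s - 2) (by
                  rw [sub_zero, abs_of_nonneg (by linarith)]
                  linarith [hss.trans_lt hsd2])
                rwa [hq1] at h7
              have step2 : dist (P u v (3*t - 1)) (P u v 1) < ε/2 := by
                apply hP₄
                rw [Real.dist_eq, abs_of_nonpos (by linarith)]
                linarith [hts.trans_lt hsd4]
              have htri := dist_triangle_right (qlim P (P u v 1) v (3*s - 2))
                (P u v (3*t - 1)) (P u v 1)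
              have hmul : 2*B*lam^k * dist (P u v 1) v ≤ 2*B*lam^(k+1) * dist u v := by
                calc 2*B*lam^k * dist (P u v 1) v ≤ 2*B*lam^k * (lam * dist u v) :=
                      mul_le_mul_of_nonneg_left hd1 hBp
                  _ = 2*B*lam^(k+1) * dist u v := by ring
              linarith
            · -- both in the middle
              rw [qlim_mid hlam0 hlam1 hlamlt hL hB1 hB2 hB3 hPa hPb hPvar u v hcs hcs2]
              have : dist (P u v (3*s - 1)) (P u v (3*t - 1)) < ε := by
                apply hP₀
                rw [Real.dist_eq]
                have h4 : (3*s - 1) - (3*t - 1) = 3 * (s - t) := by ring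
                rw [h4, abs_mul, abs_of_nonneg (by norm_num : (0:ℝ) ≤ 3)]
                linarith
              have h5 : (0:ℝ) ≤ 2*B*lam^(k+1) * dist u v := by positivity
              linarith

include hPc in
lemma qlim_continuous (u v : X) : Continuous (qlim P u v) := by
  rw [Metric.continuous_iff]
  intro t ε hε
  have h0 : Tendsto (fun k : ℕ => (2*B*dist u v) * lam^k) atTop (𝓝 0) := by
    have := (tendsto_pow_atTop_nhds_zero_of_lt_one hlam0 hlamlt).const_mul (2*B*dist u v)
    simpa using this
  have hex : ∃ k : ℕ, (2*B*dist u v) * lam^k < ε/2 := by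
    have := h0.eventually (gt_mem_nhds (by linarith : (0:ℝ) < ε/2))
    exact this.exists
  obtain ⟨k, hk⟩ := hex
  obtain ⟨δ, hδ, hosc⟩ := qlim_osc hlam0 hlam1 hlamlt hL hB1 hB2 hB3 hPa hPb hPvar hPc
    k u v t (by linarith : (0:ℝ) < ε/4)
  refine ⟨δ, hδ, fun s hs => ?_⟩
  have h1 := hosc s (by rw [← Real.dist_eq]; exact hs)
  have h2 : 2*B*lam^k*dist u v = (2*B*dist u v) * lam^k := by ring
  rw [h2] at h1
  linarith

include hPc in
lemma qlim_evar {c : ℝ} (hc1 : 1 ≤ c) (hfix : L + 2*lam*c = c) (u v : X) :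
    eVariationOn (qlim P u v) (Icc (0:ℝ) 1) ≤ ENNReal.ofReal (c * dist u v) := by
  apply iSup_le
  rintro ⟨m, w, hw, hws⟩
  have hterm : ∀ n, (∑ i ∈ Finset.range m,
      edist (approx P n u v (w (i+1))) (approx P n u v (w i)))
      ≤ ENNReal.ofReal (c * dist u v) := by
    intro n
    refine (eVariationOn.sum_le (f := approx P n u v) (n := m) hw hws).trans ?_
    refine (approx_evar hlam0 hL hPa hPb hPvar n u v).trans ?_
    exact ENNReal.ofReal_le_ofReal
      (mul_le_mul_of_nonneg_right (Tseq_le hlam0 hc1 hfix n) dist_nonneg)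
  have hlim : Tendsto (fun n => ∑ i ∈ Finset.range m,
      edist (approx P n u v (w (i+1))) (approx P n u v (w i))) atTop
      (𝓝 (∑ i ∈ Finset.range m, edist (qlim P u v (w (i+1))) (qlim P u v (w i)))) := by
    apply tendsto_finset_sum
    intro i _
    exact (tendsto_qlim hlam0 hlam1 hlamlt hL hB1 hB2 hB3 hPa hPb hPvar u v (w (i+1))).edist
      (tendsto_qlim hlam0 hlam1 hlamlt hL hB1 hB2 hB3 hPa hPb hPvar u v (w i))
  exact le_of_tendsto hlim (Eventually.of_forall hterm)

end Lim

end QCAux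


theorem quasiconvex_of_ball_connectivity
    {X : Type*} [MetricSpace X] [CompleteSpace X]
    (lam L : ℝ) (hlam0 : 0 ≤ lam) (hlam : lam < 1 / 2)
    (H : ∀ u v : X, u ≠ v → ∃ γ : C(unitInterval, X),
      pathLength γ ≤ ENNReal.ofReal (L * dist u v) ∧
      γ 0 ∈ Metric.ball u (lam * dist u v) ∧ γ 1 ∈ Metric.ball v (lam * dist u v))
    : ∀ x y : X, ∃ γ : C(unitInterval, X), γ 0 = x ∧ γ 1 = y ∧
      pathLength γ ≤ ENNReal.ofReal ((L / (1 - 2 * lam)) * dist x y) := by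
  intro x y
  by_cases hxy : x = y
  · subst hxy
    refine ⟨ContinuousMap.const _ x, rfl, rfl, ?_⟩
    have h0 : pathLength (ContinuousMap.const unitInterval x) = 0 := by
      apply eVariationOn.constant_on
      intro a ha b hb
      simp only [mem_image] at ha hb
      obtain ⟨s, _, rfl⟩ := ha
      obtain ⟨t, _, rfl⟩ := hb
      rfl
    rw [h0]
    exact zero_le
  · -- x ≠ y
    have hd : 0 < dist x y := dist_pos.2 hxy
    have h2lam : 0 < 1 - 2*lam := by
      rw [lt_div_iff₀ (by norm_num : (0:ℝ) < 2)] at hlam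
      linarith
    -- derive 1 - 2*lam ≤ L
    obtain ⟨γ, hlen, hb0, hb1⟩ := H x y hxy
    have hbd0 : dist (γ 0) x < lam * dist x y := mem_ball.1 hb0
    have hbd1 : dist (γ 1) y < lam * dist x y := mem_ball.1 hb1
    have htri : dist x y ≤ dist x (γ 0) + dist (γ 0) (γ 1) + dist (γ 1) y :=
      dist_triangle4 x (γ 0) (γ 1) y
    have hmid : (1 - 2*lam) * dist x y ≤ dist (γ 0) (γ 1) := by
      rw [dist_comm x (γ 0)] at htri
      nlinarith
    have hedist : edist (γ 0) (γ 1) ≤ ENNReal.ofReal (L * dist x y) :=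
      (eVariationOn.edist_le γ (mem_univ _) (mem_univ _)).trans hlen
    have hLpos : 0 < L := by
      have h1 : (0:ℝ≥0∞) < edist (γ 0) (γ 1) := by
        rw [edist_dist, ENNReal.ofReal_pos]
        nlinarith
      have h2 : (0:ℝ≥0∞) < ENNReal.ofReal (L * dist x y) := lt_of_lt_of_le h1 hedist
      have := ENNReal.ofReal_pos.1 h2
      nlinarith
    have hmidle : dist (γ 0) (γ 1) ≤ L * dist x y := by
      have := ENNReal.toReal_mono ENNReal.ofReal_ne_top hedist
      rwa [edist_dist, ENNReal.toReal_ofReal dist_nonneg,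
        ENNReal.toReal_ofReal (by positivity)] at this
    have hLlam : 1 - 2*lam ≤ L := by
      have h3 : (1 - 2*lam) * dist x y ≤ L * dist x y := hmid.trans hmidle
      exact le_of_mul_le_mul_right (by linarith [h3]) hd
    -- the path-selection function
    classical
    set P : X → X → ℝ → X := fun u v t =>
      if h : u = v then u else (H u v h).choose (projIcc 0 1 zero_le_one t) with hP
    have hproj0 : projIcc (0:ℝ) 1 zero_le_one 0 = 0 := by
      rw [projIcc_left]; rfl
    have hproj1 : projIcc (0:ℝ) 1 zero_le_one 1 = 1 := by
      rw [projIcc_right]; rfl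
    have hPa : ∀ u v : X, dist (P u v 0) u ≤ lam * dist u v := by
      intro u v
      by_cases h : u = v
      · simp [hP, h]
      · simp only [hP, dif_neg h, hproj0]
        exact (mem_ball.1 (H u v h).choose_spec.2.1).le
    have hPb : ∀ u v : X, dist (P u v 1) v ≤ lam * dist u v := by
      intro u v
      by_cases h : u = v
      · subst h
        simp [hP]
      · simp only [hP, dif_neg h, hproj1]
        exact (mem_ball.1 (H u v h).choose_spec.2.2).le
    have hPvar : ∀ u v : X, eVariationOn (P u v) (Icc 0 1) ≤ ENNReal.ofReal (L * dist u v) := by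
      intro u v
      by_cases h : u = v
      · have : eVariationOn (P u v) (Icc 0 1) = 0 := by
          apply eVariationOn.constant_on
          intro a ha b hb
          simp only [mem_image] at ha hb
          obtain ⟨s, _, rfl⟩ := ha
          obtain ⟨t, _, rfl⟩ := hb
          simp [hP, h]
        rw [this]
        exact zero_le
      · have he : EqOn (P u v)
            (((H u v h).choose : unitInterval → X) ∘ (projIcc 0 1 zero_le_one)) (Icc 0 1) := by
          intro t _
          simp [hP, dif_neg h]
        rw [eVariationOn.eq_of_eqOn he,
          eVariationOn.comp_eq_of_monotoneOn ((H u v h).choose : unitInterval → X)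
            (projIcc 0 1 zero_le_one) ((monotone_projIcc zero_le_one).monotoneOn _)]
        have himg : projIcc (0:ℝ) 1 zero_le_one '' Icc 0 1 = univ := by
          apply eq_univ_iff_forall.2
          intro z
          exact ⟨(z : ℝ), z.2, by rw [projIcc_val]⟩
        rw [himg]
        exact (H u v h).choose_spec.1
    have hPc : ∀ u v : X, Continuous (P u v) := by
      intro u v
      by_cases h : u = v
      · simp only [hP, dif_pos h]
        exact continuous_const
      · simp only [hP, dif_neg h]
        exact (H u v h).choose.continuous.comp (continuous_projIcc)
    -- constants
    set B : ℝ := (L + 2) / (1 - lam) with hBdef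
    have h1l : 0 < 1 - lam := by linarith
    have hkey : B * (1 - lam) = L + 2 := div_mul_cancel₀ _ (ne_of_gt h1l)
    have hB1 : 1 ≤ B := by
      rw [hBdef, le_div_iff₀ h1l]
      linarith
    have hB2 : lam + L ≤ B := by
      rw [hBdef, le_div_iff₀ h1l]
      nlinarith
    have hB3 : B * lam + lam + 1 ≤ B := by nlinarith [hkey]
    have hlam1 : lam ≤ 1 := by linarith
    have hlamlt : lam < 1 := by linarith
    have hLnn : 0 ≤ L := hLpos.le
    set c : ℝ := L / (1 - 2*lam) with hcdef
    have hc1 : 1 ≤ c := by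
      rw [hcdef, le_div_iff₀ h2lam]
      linarith
    have hfix : L + 2*lam*c = c := by
      rw [hcdef]
      field_simp
      ring
    -- the limit path
    refine ⟨⟨fun t : unitInterval => QCAux.qlim P x y (t : ℝ),
      (QCAux.qlim_continuous hlam0 hlam1 hlamlt hLnn hB1 hB2 hB3 hPa hPb hPvar hPc x y).comp
        continuous_subtype_val⟩, ?_, ?_, ?_⟩
    · show QCAux.qlim P x y ((0 : unitInterval) : ℝ) = x
      have h9 : ((0 : unitInterval) : ℝ) = 0 := rfl
      rw [h9]
      exact QCAux.qlim_nonpos hlam0 hlam1 hlamlt hLnn hB1 hB2 hB3 hPa hPb hPvar x y le_rfl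
    · show QCAux.qlim P x y ((1 : unitInterval) : ℝ) = y
      have h9 : ((1 : unitInterval) : ℝ) = 1 := rfl
      rw [h9]
      exact QCAux.qlim_one_le hlam0 hlam1 hlamlt hLnn hB1 hB2 hB3 hPa hPb hPvar x y le_rfl
    · show eVariationOn (fun t : unitInterval => QCAux.qlim P x y (t : ℝ)) univ ≤ _
      have hcomp : eVariationOn
          ((QCAux.qlim P x y) ∘ (Subtype.val : unitInterval → ℝ)) univ
          = eVariationOn (QCAux.qlim P x y) (Subtype.val '' univ) :=
        eVariationOn.comp_eq_of_monotoneOn _ _ (fun a _ b _ hab => hab)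
      have himg2 : (Subtype.val '' (univ : Set unitInterval)) = Icc (0:ℝ) 1 := by
        rw [Subtype.coe_image_univ]
      rw [show (fun t : unitInterval => QCAux.qlim P x y (t : ℝ))
          = (QCAux.qlim P x y) ∘ (Subtype.val : unitInterval → ℝ) from rfl,
        hcomp, himg2]
      exact QCAux.qlim_evar hlam0 hlam1 hlamlt hLnn hB1 hB2 hB3 hPa hPb hPvar hPc hc1 hfix x y
end

section
/- Let X be a metric space and ν a Borel measure on X. If Y ⊆ X is a nondegenerate continuum (a compact connected set with more than one point), then there exists a point y ∈ Y such that for all r > 0 one has ν(B(y,r)) ≤ (10 r / diam(Y)) · ν(X). -/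
open Metric Set MeasureTheory Filter Topology unitInterval
open scoped NNReal ENNReal

/-! If every `y ∈ Y` had a radius `r y` with `ν (ball y (r y)) > 10 * r y / diam Y * ν univ`,
a Vitali subfamily of a finite subcover by these balls would consist of disjoint balls whose
`5`-fold enlargements still cover `Y`. Projecting the connected set `Y` to `ℝ` by a distance
function shows that these enlargements have total diameter at least `diam Y`, so the disjoint
balls would carry more than the total mass `ν univ`. -/

theorem sub_le_sum_of_Icc_subset_biUnion_closedBall {ι : Type*} {a b : ℝ} (s : Finset ι)
    (c ρ : ι → ℝ) (hρ : ∀ i ∈ s, 0 ≤ ρ i) (h : Icc a b ⊆ ⋃ i ∈ s, closedBall (c i) (ρ i)) :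
    b - a ≤ ∑ i ∈ s, 2 * ρ i := by
  have hsum : 0 ≤ ∑ i ∈ s, 2 * ρ i :=
    Finset.sum_nonneg fun i hi => mul_nonneg zero_le_two (hρ i hi)
  refine (ENNReal.ofReal_le_ofReal_iff hsum).1 ?_
  calc ENNReal.ofReal (b - a) = volume (Icc a b) := Real.volume_Icc.symm
    _ ≤ volume (⋃ i ∈ s, closedBall (c i) (ρ i)) := measure_mono h
    _ ≤ ∑ i ∈ s, volume (closedBall (c i) (ρ i)) := measure_biUnion_finset_le s _
    _ = ENNReal.ofReal (∑ i ∈ s, 2 * ρ i) := by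
      simp only [Real.volume_closedBall]
      exact (ENNReal.ofReal_sum_of_nonneg fun i hi => mul_nonneg zero_le_two (hρ i hi)).symm

theorem IsPreconnected.diam_le_sum_of_subset_biUnion_closedBall {X ι : Type*}
    [PseudoMetricSpace X] {Y : Set X} (hY : IsPreconnected Y) (s : Finset ι) (c : ι → X)
    (ρ : ι → ℝ) (hρ : ∀ i ∈ s, 0 ≤ ρ i) (h : Y ⊆ ⋃ i ∈ s, closedBall (c i) (ρ i)) :
    diam Y ≤ ∑ i ∈ s, 2 * ρ i := by
  refine diam_le_of_forall_dist_le
    (Finset.sum_nonneg fun i hi => mul_nonneg zero_le_two (hρ i hi)) fun x hx y hy => ?_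
  have hIcc : Icc 0 (dist x y) ⊆ ⋃ i ∈ s, closedBall (dist x (c i)) (ρ i) := by
    intro t ht
    rw [← dist_self x] at ht
    obtain ⟨z, hzY, rfl⟩ :=
      hY.intermediate_value hx hy (continuous_const.dist continuous_id).continuousOn ht
    obtain ⟨i, hi, hzi⟩ := mem_iUnion₂.1 (h hzY)
    exact mem_iUnion₂.2 ⟨i, hi, (dist_dist_dist_le_right x z (c i)).trans hzi⟩
  simpa using sub_le_sum_of_Icc_subset_biUnion_closedBall s _ ρ hρ hIcc

theorem IsCompact.exists_finset_pairwiseDisjoint_ball_subset_biUnion_closedBall {X : Type*}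
    [PseudoMetricSpace X] {Y : Set X} (hY : IsCompact Y) (r : X → ℝ) (hr : ∀ y ∈ Y, 0 < r y)
    {τ : ℝ} (hτ : 3 < τ) :
    ∃ s : Finset X, ↑s ⊆ Y ∧ (↑s : Set X).PairwiseDisjoint (fun y => ball y (r y)) ∧
      Y ⊆ ⋃ y ∈ s, closedBall y (τ * r y) := by
  obtain ⟨T, hTY, hYT⟩ :=
    hY.elim_nhds_subcover (fun y => ball y (r y)) fun y hy => ball_mem_nhds y (hr y hy)
  obtain ⟨R, hR⟩ := (T.finite_toSet.image r).bddAbove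
  obtain ⟨u, huT, hdisj, hcov⟩ := Vitali.exists_disjoint_subfamily_covering_enlargement_closedBall
    (↑T : Set X) id r R (fun y hy => hR (mem_image_of_mem r hy)) τ hτ
  have hu : u.Finite := T.finite_toSet.subset huT
  refine ⟨hu.toFinset, ?_, ?_, ?_⟩
  · rw [hu.coe_toFinset]
    exact fun y hy => hTY y (huT hy)
  · rw [hu.coe_toFinset]
    exact hdisj.mono fun y => ball_subset_closedBall
  · intro z hz
    obtain ⟨y, hyT, hzy⟩ := mem_iUnion₂.1 (hYT hz)
    obtain ⟨w, hwu, hsub⟩ := hcov y hyT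
    exact mem_iUnion₂.2 ⟨w, hu.mem_toFinset.2 hwu, hsub (ball_subset_closedBall hzy)⟩

theorem exists_point_with_small_mass_balls
    {X : Type*} [MetricSpace X] [MeasurableSpace X] [BorelSpace X]
    (ν : Measure X) (Y : Set X) (hYcpt : IsCompact Y) (hYconn : IsConnected Y)
    (hYnt : Y.Nontrivial)
    : ∃ y ∈ Y, ∀ r : ℝ, 0 < r →
      ν (Metric.ball y r) ≤
        ENNReal.ofReal (10 * r / Metric.diam Y) * ν Set.univ := by
  have hD : 0 < diam Y := diam_pos hYnt hYcpt.isBounded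
  by_contra! hbig
  choose! r hr_pos hr_big using hbig
  obtain ⟨s, hsY, hdisj, hcov⟩ :=
    hYcpt.exists_finset_pairwiseDisjoint_ball_subset_biUnion_closedBall r hr_pos
      (τ := 5) (by norm_num)
  have hs : s.Nonempty := by
    obtain ⟨i, hi, -⟩ := mem_iUnion₂.1 (hcov hYconn.nonempty.some_mem)
    exact ⟨i, hi⟩
  have hdiam : diam Y ≤ ∑ y ∈ s, 10 * r y :=
    (hYconn.isPreconnected.diam_le_sum_of_subset_biUnion_closedBall s id (fun y => 5 * r y)
      (fun y hy => by linarith [hr_pos y (hsY hy)]) hcov).trans_eq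
      (Finset.sum_congr rfl fun _ _ => by ring)
  have hone : 1 ≤ ∑ y ∈ s, 10 * r y / diam Y := by
    rwa [← Finset.sum_div, one_le_div hD]
  apply lt_irrefl (ν univ)
  calc ν univ ≤ ENNReal.ofReal (∑ y ∈ s, 10 * r y / diam Y) * ν univ :=
        le_mul_of_one_le_left' (ENNReal.one_le_ofReal.2 hone)
    _ = ∑ y ∈ s, ENNReal.ofReal (10 * r y / diam Y) * ν univ := by
      rw [ENNReal.ofReal_sum_of_nonneg fun y hy => by have := hr_pos y (hsY hy); positivity,
        Finset.sum_mul]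
    _ < ∑ y ∈ s, ν (ball y (r y)) :=
      ENNReal.sum_lt_sum_of_nonempty hs fun y hy => hr_big y (hsY hy)
    _ = ν (⋃ y ∈ s, ball y (r y)) :=
      (measure_biUnion_finset hdisj fun _ _ => measurableSet_ball).symm
    _ ≤ ν univ := measure_mono (subset_univ _)
end

section
/- Let (Z,d,μ) be a complete metric measure space such that for every C > 0 there are constants m = m(C) > 0 and L = L(C) > 0 with the property that whenever R > 0 and B, B' ⊆ Z are balls of radius R with dist(B,B') ≤ CR, the Q-modulus of the family of paths in Γ(B,B') of length at most LR is greater than m. Let 0 < λ < 1/8. Then there are constants Λ = Λ(λ) > 0 and K = K(λ) > 0 with the following property. If ρ:Z→[0,∞] is a Borel function, B = B(p,r) ⊆ Z is a ball, and F₁, F₂ ⊆ Z are continua such that Fᵢ ∩ (1/4)B ≠ ∅ and Fᵢ \ B ≠ ∅ for i = 1,2, then there are disjoint balls Bᵢ := B(qᵢ, λr) for i = 1,2 and a path σ:[0,1]→Z such that: (i) qᵢ ∈ Fᵢ for i = 1,2; (ii) Bᵢ ⊆ (7/8)B and ∫_{Bᵢ} ρ^Q dμ ≤ 80λ ∫_B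 ρ^Q dμ for i = 1,2; (iii) σ joins (1/4)B₁ and (1/4)B₂, has image contained in ΛB, length at most Λr, and ρ-length ∫_σ ρ ds at most K (∫_{ΛB} ρ^Q dμ)^{1/Q}. -/
open Metric Set MeasureTheory Filter Topology unitInterval
open scoped NNReal ENNReal

section aux

lemma exists_two_small {N : ℕ} (hN : 2 ≤ N) (g : ℕ → ℝ≥0∞) {T a : ℝ≥0∞}
    (ha0 : a ≠ 0) (hsum : ∑ j ∈ Finset.range N, g j ≤ T)
    (hNa : 2 ≤ ((N - 1 : ℕ) : ℝ≥0∞) * a) :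
    ∃ i < N, ∃ j < N, i ≠ j ∧ g i ≤ a * T ∧ g j ≤ a * T := by
  classical
  have hg : ∀ k < N, g k ≤ T := fun k hk =>
    le_trans (Finset.single_le_sum (f := g) (fun i _ => zero_le) (Finset.mem_range.mpr hk)) hsum
  by_cases hT : T ≤ a * T
  · exact ⟨0, by omega, 1, by omega, by omega, (hg 0 (by omega)).trans hT,
      (hg 1 (by omega)).trans hT⟩
  push_neg at hT
  have hT0 : T ≠ 0 := by rintro rfl; simp at hT
  have hTtop : T ≠ ⊤ := by rintro rfl; rw [ENNReal.mul_top ha0] at hT; exact lt_irrefl _ hT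
  by_contra hcon
  push_neg at hcon
  set S := (Finset.range N).filter (fun j => g j ≤ a * T) with hS
  have hcard : S.card ≤ 1 := by
    refine Finset.card_le_one.mpr fun x hx y hy => ?_
    simp only [hS, Finset.mem_filter, Finset.mem_range] at hx hy
    by_contra hxy
    exact absurd hy.2 (not_le.mpr (hcon x hx.1 y hy.1 hxy hx.2))
  set B := (Finset.range N).filter (fun j => ¬ g j ≤ a * T) with hB
  have hcards : S.card + B.card = N := Finset.card_filter_add_card_filter_not
    (s := Finset.range N) (p := fun j => g j ≤ a * T) |>.trans (Finset.card_range N)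
  have hBcard : N - 1 ≤ B.card := by omega
  have hsumB : (B.card : ℝ≥0∞) * (a * T) ≤ ∑ j ∈ B, g j := by
    rw [← nsmul_eq_mul]
    exact Finset.card_nsmul_le_sum B g (a * T)
      (fun i hi => le_of_lt (not_le.mp (Finset.mem_filter.mp hi).2))
  have h1 : T < 2 * T := by
    rw [two_mul]; exact ENNReal.lt_add_right hTtop hT0
  have h2 : (2 : ℝ≥0∞) * T ≤ ((N - 1 : ℕ) : ℝ≥0∞) * a * T :=
    mul_le_mul_left hNa T
  have h3 : ((N - 1 : ℕ) : ℝ≥0∞) * a * T ≤ (B.card : ℝ≥0∞) * (a * T) := by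
    rw [mul_assoc]
    exact mul_le_mul_left (by exact_mod_cast Nat.cast_le.mpr hBcard) _
  have h4 : ∑ j ∈ B, g j ≤ T :=
    le_trans (Finset.sum_le_sum_of_subset (Finset.filter_subset _ _)) hsum
  exact absurd (le_trans h2 (le_trans h3 (le_trans hsumB h4))) (not_le.mpr h1)

lemma exists_on_sphere {Z : Type*} [MetricSpace Z] {F : Set Z} (hF : IsConnected F)
    {p a b : Z} (ha : a ∈ F) (hb : b ∈ F) {s : ℝ}
    (h1 : dist a p ≤ s) (h2 : s ≤ dist b p) : ∃ q ∈ F, dist q p = s := by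
  have := hF.isPreconnected.intermediate_value ha hb
    (Continuous.continuousOn (continuous_dist.comp (continuous_id.prodMk continuous_const)))
    (f := fun z => dist z p) ⟨h1, h2⟩
  obtain ⟨q, hq, hq2⟩ := this
  exact ⟨q, hq, hq2⟩

end aux

set_option maxHeartbeats 1000000 in
theorem subballs_lemma
    {Z : Type*} [MetricSpace Z] [CompleteSpace Z] [MeasurableSpace Z] [BorelSpace Z]
    (μ : Measure Z) [IsLocallyFiniteMeasure μ]
    (hsupp : ∀ (z : Z) (r : ℝ), 0 < r → 0 < μ (Metric.ball z r))
    {Q : ℝ} (hQ : 1 ≤ Q)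
    (H : ∀ C : ℝ, 0 < C → ∃ m : ℝ, 0 < m ∧ ∃ L : ℝ, 0 < L ∧
      ∀ (R : ℝ), 0 < R → ∀ p p' : Z,
        setSep (Metric.ball p R) (Metric.ball p' R) ≤ ENNReal.ofReal (C * R) →
        ENNReal.ofReal m < modulus Q μ
          {γ | γ ∈ joinPaths (Metric.ball p R) (Metric.ball p' R) ∧
            pathLength γ ≤ ENNReal.ofReal (L * R)})
    (lam : ℝ) (hlam0 : 0 < lam) (hlam : lam < 1 / 8)
    : ∃ Λ : ℝ, 0 < Λ ∧ ∃ K : ℝ, 0 < K ∧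
      ∀ ρ : Z → ℝ≥0∞, Measurable ρ → ∀ (p : Z) (r : ℝ), 0 < r →
      ∀ F₁ F₂ : Set Z, IsCompact F₁ → IsConnected F₁ → IsCompact F₂ → IsConnected F₂ →
        (F₁ ∩ Metric.ball p (r / 4)).Nonempty → (F₁ \ Metric.ball p r).Nonempty →
        (F₂ ∩ Metric.ball p (r / 4)).Nonempty → (F₂ \ Metric.ball p r).Nonempty →
      ∃ q₁ ∈ F₁, ∃ q₂ ∈ F₂, ∃ sigma : C(unitInterval, Z),
        Disjoint (Metric.ball q₁ (lam * r)) (Metric.ball q₂ (lam * r)) ∧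
        Metric.ball q₁ (lam * r) ⊆ Metric.ball p (7 * r / 8) ∧
        Metric.ball q₂ (lam * r) ⊆ Metric.ball p (7 * r / 8) ∧
        (∫⁻ z in Metric.ball q₁ (lam * r), ρ z ^ Q ∂μ) ≤
          ENNReal.ofReal (80 * lam) * ∫⁻ z in Metric.ball p r, ρ z ^ Q ∂μ ∧
        (∫⁻ z in Metric.ball q₂ (lam * r), ρ z ^ Q ∂μ) ≤
          ENNReal.ofReal (80 * lam) * ∫⁻ z in Metric.ball p r, ρ z ^ Q ∂μ ∧
        sigma 0 ∈ Metric.ball q₁ (lam * r / 4) ∧ sigma 1 ∈ Metric.ball q₂ (lam * r / 4) ∧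
        Set.range sigma ⊆ Metric.ball p (Λ * r) ∧
        pathLength sigma ≤ ENNReal.ofReal (Λ * r) ∧
        pathIntegral ρ sigma ≤
          ENNReal.ofReal K * (∫⁻ z in Metric.ball p (Λ * r), ρ z ^ Q ∂μ) ^ (1 / Q) := by
  classical
  have hQ0 : (0:ℝ) < Q := lt_of_lt_of_le one_pos hQ
  have hQne : Q ≠ 0 := ne_of_gt hQ0
  obtain ⟨m, hm0, L, hL0, hH⟩ := H (16 / lam) (by positivity)
  refine ⟨1 + L, by positivity, (m ^ (1/Q))⁻¹, by positivity, ?_⟩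
  intro ρ hρ p r hr F₁ F₂ hF₁c hF₁conn hF₂c hF₂conn h₁in h₁out h₂in h₂out
  -- the annuli
  set N := ⌊5 / (16 * lam)⌋₊ with hNdef
  have hN2 : 2 ≤ N := by
    apply Nat.le_floor
    rw [Nat.cast_ofNat, le_div_iff₀ (by positivity)]
    linarith
  have hNle : (N : ℝ) ≤ 5 / (16 * lam) := Nat.floor_le (by positivity)
  have hNgt : 5 / (16 * lam) - 1 < (N : ℝ) := Nat.sub_one_lt_floor _
  set sfun : ℕ → ℝ := fun j => r/4 + lam*r + 2*lam*r*j with hsfun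
  set A : ℕ → Set Z := fun j => ball p (sfun j + lam*r) \ closedBall p (sfun j - lam*r) with hA
  clear_value sfun N
  have hAmeas : ∀ j, MeasurableSet (A j) := fun j =>
    measurableSet_ball.diff measurableSet_closedBall
  have hs7 : ∀ j < N, sfun j + lam * r ≤ 7 * r / 8 := by
    intro j hj
    have hj1 : (j : ℝ) + 1 ≤ N := by exact_mod_cast Nat.succ_le_of_lt hj
    have h5 : 2 * lam * r * N ≤ 2 * lam * r * (5 / (16 * lam)) :=
      mul_le_mul_of_nonneg_left hNle (by positivity)
    have h6 : 2 * lam * r * (5 / (16 * lam)) = 5 * r / 8 := by field_simp; ring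
    simp only [hsfun]
    nlinarith [mul_le_mul_of_nonneg_left hj1 (by positivity : (0:ℝ) ≤ 2 * lam * r)]
  have hAsub : ∀ j < N, A j ⊆ ball p (7 * r / 8) := by
    intro j hj z hz
    rw [mem_ball]
    have h1 : dist z p < sfun j + lam * r := mem_ball.mp hz.1
    exact lt_of_lt_of_le h1 (hs7 j hj)
  have hAdisj : ∀ i j, i < j → Disjoint (A i) (A j) := by
    intro i j hij
    rw [Set.disjoint_left]
    intro z hzi hzj
    have h1 : dist z p < sfun i + lam * r := mem_ball.mp hzi.1
    have h2 : ¬ dist z p ≤ sfun j - lam * r := fun h => hzj.2 (mem_closedBall.mpr h)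
    have h3 : (i : ℝ) + 1 ≤ j := by exact_mod_cast hij
    have : sfun i + lam * r ≤ sfun j - lam * r := by
      simp only [hsfun]
      nlinarith [mul_le_mul_of_nonneg_left h3 (by positivity : (0:ℝ) ≤ 2 * lam * r)]
    exact h2 (le_trans (le_of_lt h1) this)
  -- pigeonhole
  set g : ℕ → ℝ≥0∞ := fun j => ∫⁻ z in A j, ρ z ^ Q ∂μ with hg
  have hsum : ∑ j ∈ Finset.range N, g j ≤ ∫⁻ z in ball p r, ρ z ^ Q ∂μ := by
    rw [← lintegral_biUnion_finset (fun i hi j hj hij => by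
        rcases lt_or_gt_of_ne hij with h | h
        exacts [hAdisj i j h, (hAdisj j i h).symm])
      (fun j _ => hAmeas j)]
    apply lintegral_mono_set
    refine Set.iUnion₂_subset fun j hj => (hAsub j (Finset.mem_range.mp hj)).trans ?_
    exact ball_subset_ball (by linarith)
  have hNa : (2:ℝ≥0∞) ≤ ((N - 1 : ℕ) : ℝ≥0∞) * ENNReal.ofReal (80 * lam) := by
    have hcast : ((N - 1 : ℕ) : ℝ) = (N : ℝ) - 1 := by
      rw [Nat.cast_sub (by omega)]; norm_num
    have hreal : (2:ℝ) ≤ ((N : ℝ) - 1) * (80 * lam) := by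
      have h6 : 5 / (16 * lam) * (80 * lam) = 25 := by field_simp; ring
      nlinarith [mul_lt_mul_of_pos_right hNgt (by positivity : (0:ℝ) < 80 * lam)]
    calc (2:ℝ≥0∞) = ENNReal.ofReal 2 := by norm_num
    _ ≤ ENNReal.ofReal (((N - 1 : ℕ) : ℝ) * (80 * lam)) := by
        rw [hcast]; exact ENNReal.ofReal_le_ofReal hreal
    _ = ((N - 1 : ℕ) : ℝ≥0∞) * ENNReal.ofReal (80 * lam) := by
        rw [ENNReal.ofReal_mul (by positivity), ENNReal.ofReal_natCast]
  obtain ⟨i, hiN, j, hjN, hij, hgi, hgj⟩ := exists_two_small hN2 g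
    (by simp [ENNReal.ofReal_eq_zero]; linarith) hsum hNa
  -- points on spheres
  obtain ⟨a₁, ha₁F, ha₁b⟩ := h₁in
  obtain ⟨b₁, hb₁F, hb₁b⟩ := h₁out
  obtain ⟨a₂, ha₂F, ha₂b⟩ := h₂in
  obtain ⟨b₂, hb₂F, hb₂b⟩ := h₂out
  have hsbound : ∀ k < N, r / 4 ≤ sfun k ∧ sfun k ≤ 7 * r / 8 - lam * r := by
    intro k hk
    constructor
    · have h0 : (0:ℝ) ≤ lam * r + 2 * lam * r * k := by positivity
      simp only [hsfun]; linarith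
    · linarith [hs7 k hk]
  have hlr : (0:ℝ) < lam * r := mul_pos hlam0 hr
  have hsfr : ∀ k < N, sfun k < r := fun k hk => by linarith [(hsbound k hk).2]
  obtain ⟨q₁, hq₁F, hq₁d⟩ := exists_on_sphere hF₁conn ha₁F hb₁F
    (le_trans (le_of_lt (mem_ball.mp ha₁b)) (hsbound i hiN).1)
    (le_trans (le_of_lt (hsfr i hiN)) (not_lt.mp (fun h => hb₁b (mem_ball.mpr h))))
  obtain ⟨q₂, hq₂F, hq₂d⟩ := exists_on_sphere hF₂conn ha₂F hb₂F
    (le_trans (le_of_lt (mem_ball.mp ha₂b)) (hsbound j hjN).1)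
    (le_trans (le_of_lt (hsfr j hjN)) (not_lt.mp (fun h => hb₂b (mem_ball.mpr h))))
  have hball : ∀ (q : Z) (k : ℕ), dist q p = sfun k → ball q (lam * r) ⊆ A k := by
    intro q k hqd z hz
    have hd : dist z q < lam * r := mem_ball.mp hz
    have ht1 := dist_triangle z q p
    have ht2 := dist_triangle q z p
    rw [dist_comm q z] at ht2
    constructor
    · rw [mem_ball]; linarith
    · intro hc
      rw [mem_closedBall] at hc
      linarith
  have hball₁ := hball q₁ i hq₁d
  have hball₂ := hball q₂ j hq₂d
  have hAD : Disjoint (A i) (A j) := by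
    rcases lt_or_gt_of_ne hij with h | h
    exacts [hAdisj i j h, (hAdisj j i h).symm]
  -- the path construction
  have hR0 : (0:ℝ) < lam * r / 8 := by positivity
  have hsep : setSep (ball q₁ (lam * r / 8)) (ball q₂ (lam * r / 8)) ≤
      ENNReal.ofReal (16 / lam * (lam * r / 8)) := by
    have hCR : 16 / lam * (lam * r / 8) = 2 * r := by field_simp; ring
    have h1 : setSep (ball q₁ (lam * r / 8)) (ball q₂ (lam * r / 8)) ≤ edist q₁ q₂ := by
      unfold setSep
      exact iInf₂_le_of_le q₁ (mem_ball_self hR0) (iInf₂_le q₂ (mem_ball_self hR0))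
    refine h1.trans ?_
    rw [edist_dist, hCR]
    apply ENNReal.ofReal_le_ofReal
    calc dist q₁ q₂ ≤ dist q₁ p + dist q₂ p := dist_triangle_right _ _ _
    _ ≤ 2 * r := by
        have := hsfr i hiN; have := hsfr j hjN; linarith [hq₁d, hq₂d]
  have hmod := hH (lam * r / 8) hR0 q₁ q₂ hsep
  set Γ : Set C(unitInterval, Z) :=
    {γ | γ ∈ joinPaths (ball q₁ (lam * r / 8)) (ball q₂ (lam * r / 8)) ∧
      pathLength γ ≤ ENNReal.ofReal (L * (lam * r / 8))} with hΓ
  set T := ∫⁻ z in ball p ((1 + L) * r), ρ z ^ Q ∂μ with hTdef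
  set M := ENNReal.ofReal m with hMdef
  have hM0 : M ≠ 0 := by simp [hMdef, ENNReal.ofReal_eq_zero]; linarith
  have hMtop : M ≠ ⊤ := ENNReal.ofReal_ne_top
  set c := (M / T) ^ (1 / Q) with hc
  set ρ' := fun z => c * (ball p ((1 + L) * r)).indicator ρ z with hρ'
  have hρ'meas : Measurable ρ' := (hρ.indicator measurableSet_ball).const_mul c
  have hintρ' : ∫⁻ z, ρ' z ^ Q ∂μ = c ^ Q * T := by
    simp only [hρ']
    calc ∫⁻ z, (c * (ball p ((1+L)*r)).indicator ρ z) ^ Q ∂μ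
        = ∫⁻ z, c ^ Q * ((ball p ((1+L)*r)).indicator ρ z) ^ Q ∂μ := by
          simp_rw [ENNReal.mul_rpow_of_nonneg _ _ (le_of_lt hQ0)]
    _ = c ^ Q * ∫⁻ z, ((ball p ((1+L)*r)).indicator ρ z) ^ Q ∂μ :=
          lintegral_const_mul _ ((hρ.indicator measurableSet_ball).pow_const Q)
    _ = c ^ Q * ∫⁻ z, (ball p ((1+L)*r)).indicator (fun w => ρ w ^ Q) z ∂μ := by
          congr 1; apply lintegral_congr; intro z
          by_cases hz : z ∈ ball p ((1+L)*r)
          · simp [hz]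
          · simp [hz, ENNReal.zero_rpow_of_pos hQ0]
    _ = c ^ Q * T := by rw [lintegral_indicator measurableSet_ball]
  have hcQ : c ^ Q = M / T := by
    rw [hc, ← ENNReal.rpow_mul, one_div_mul_cancel hQne, ENNReal.rpow_one]
  have hle : ∫⁻ z, ρ' z ^ Q ∂μ ≤ M := by
    rw [hintρ', hcQ]
    rcases eq_or_ne T 0 with h0 | h0
    · rw [h0, mul_zero]; exact zero_le
    rcases eq_or_ne T ⊤ with htop | htop
    · rw [htop, ENNReal.div_top, zero_mul]; exact zero_le
    · rw [ENNReal.div_mul_cancel h0 htop]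
  have hnadm : ¬ Admissible ρ' Γ := by
    intro hadm
    have hle2 : modulus Q μ Γ ≤ ∫⁻ z, ρ' z ^ Q ∂μ :=
      iInf_le_of_le ρ' (iInf_le_of_le hρ'meas (iInf_le _ hadm))
    exact absurd (lt_of_lt_of_le hmod (hle2.trans hle)) (lt_irrefl _)
  rw [Admissible] at hnadm
  push_neg at hnadm
  obtain ⟨γ, hγΓ, hγfin, hγlt⟩ := hnadm
  rw [hΓ, Set.mem_setOf_eq] at hγΓ
  obtain ⟨⟨hγ0, hγ1⟩, hγlen⟩ := hγΓ
  have hγ0' : dist (γ 0) q₁ < lam * r / 8 := mem_ball.mp hγ0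
  have hγ1' : dist (γ 1) q₂ < lam * r / 8 := mem_ball.mp hγ1
  have hp : lam * (L * r) < 1/8 * (L * r) := mul_lt_mul_of_pos_right hlam (mul_pos hL0 hr)
  have hLrle : L * (lam * r / 8) ≤ (1 + L) * r := by nlinarith [mul_pos hL0 hr]
  have hrange : ∀ t : unitInterval, γ t ∈ ball p ((1 + L) * r) := by
    intro t
    have h1 : edist (γ t) (γ 0) ≤ ENNReal.ofReal (L * (lam * r / 8)) :=
      le_trans (eVariationOn.edist_le γ (mem_univ t) (mem_univ 0)) hγlen
    rw [edist_dist] at h1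
    have h2 : dist (γ t) (γ 0) ≤ L * (lam * r / 8) :=
      (ENNReal.ofReal_le_ofReal_iff (by positivity)).mp h1
    rw [mem_ball]
    have ht1 := dist_triangle (γ t) (γ 0) p
    have ht2 := dist_triangle (γ 0) q₁ p
    have hs2 : sfun i ≤ 7 * r / 8 - lam * r := (hsbound i hiN).2
    nlinarith [hq₁d, mul_pos hL0 hr, hp]
  have hmeascomp : Measurable fun t : ℝ =>
      (ball p ((1+L)*r)).indicator ρ (γ (projIcc 0 1 zero_le_one t)) :=
    (hρ.indicator measurableSet_ball).comp
      (γ.continuous.measurable.comp continuous_projIcc.measurable)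
  have hPI : pathIntegral ρ' γ = c * pathIntegral ρ γ := by
    unfold pathIntegral
    simp only [hρ']
    rw [lintegral_const_mul c hmeascomp]
    congr 1
    apply lintegral_congr
    intro t
    exact Set.indicator_of_mem (hrange _) ρ
  have hIle : pathIntegral ρ γ ≤ c⁻¹ := by
    rw [ENNReal.le_inv_iff_mul_le, mul_comm, ← hPI]
    exact le_of_lt hγlt
  have hcinv : c⁻¹ = ENNReal.ofReal ((m ^ (1/Q))⁻¹) * T ^ (1 / Q) := by
    rw [hc, ← ENNReal.inv_rpow, ENNReal.inv_div (Or.inr hMtop) (Or.inr hM0),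
      ENNReal.div_rpow_of_nonneg _ _ (by positivity), hMdef,
      ENNReal.ofReal_rpow_of_pos hm0,
      ENNReal.ofReal_inv_of_pos (Real.rpow_pos_of_pos hm0 _), div_eq_mul_inv, mul_comm]
  refine ⟨q₁, hq₁F, q₂, hq₂F, γ, Disjoint.mono hball₁ hball₂ hAD,
    hball₁.trans (hAsub i hiN), hball₂.trans (hAsub j hjN),
    le_trans (lintegral_mono_set hball₁) hgi,
    le_trans (lintegral_mono_set hball₂) hgj,
    mem_ball.mpr (by linarith), mem_ball.mpr (by linarith),
    ?_, ?_, ?_⟩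
  · rintro _ ⟨t, rfl⟩; exact hrange t
  · exact hγlen.trans (ENNReal.ofReal_le_ofReal hLrle)
  · exact hIle.trans (le_of_eq hcinv)
end

section
/- Suppose (Z,d) is a uniformly perfect compact metric space, and G ↷ Z is a fixed point free uniformly quasi-Möbius action by homeomorphisms which is cocompact on the space Tri(Z) of distinct triples. Then the action is minimal: for all z, z' ∈ Z and all ε > 0, there is a group element g ∈ G such that d(g(z'), z) < ε. -/
open Metric Set MeasureTheory Filter Topology unitInterval
open scoped NNReal ENNReal

/-! Choose `x ≠ z` very close to `z` and move the pair `(x, z)` by some `h` to a `δ`-separated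
pair. For `w₁, w₂` outside `B(z, ε)` the cross-ratio `[w₁, x, w₂, z]` is of order `d(x, z)`, so the
quasi-Möbius bound together with `d(hx, hz) ≥ δ` forces `d(hw₁, hw₂) < δ`: `h` squeezes the
complement of `B(z, ε)` to diameter `< δ`. As the action is fixed point free, the orbit of `z'`
contains two `δ`-separated points, and `h⁻¹` must send one of them into `B(z, ε)`. -/

def UniformlyPerfect (Z : Type*) [MetricSpace Z] : Prop :=
  ∃ lam : ℝ, 1 < lam ∧ ∀ (a : Z) (R : ℝ), 0 < R →
    R ≤ Metric.diam (Set.univ : Set Z) →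
    (Metric.ball a R \ Metric.ball a (R / lam)).Nonempty

theorem UniformlyPerfect.nhdsNE_neBot {Z : Type*} [MetricSpace Z] [BoundedSpace Z]
    [Nontrivial Z] (hup : UniformlyPerfect Z) (z : Z) : (𝓝[≠] z).NeBot := by
  obtain ⟨lam, hlam, hperf⟩ := hup
  have hdiam : 0 < diam (univ : Set Z) :=
    diam_pos nontrivial_univ (Bornology.isBounded_univ.2 ‹_›)
  refine nhdsWithin_basis_ball.neBot_iff.2 fun {r} hr => ?_
  obtain ⟨x, hx_lt, hx_ge⟩ := hperf z (min r (diam univ)) (lt_min hr hdiam) (min_le_right _ _)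
  rw [mem_ball] at hx_lt
  rw [mem_ball, not_lt] at hx_ge
  have hx_pos : 0 < dist x z := lt_of_lt_of_le (by positivity) hx_ge
  exact ⟨x, mem_ball.2 (hx_lt.trans_le (min_le_left _ _)), dist_pos.1 hx_pos⟩

theorem exists_ne_dist_lt {Z : Type*} [MetricSpace Z] (z : Z) [(𝓝[≠] z).NeBot] {r : ℝ}
    (hr : 0 < r) : ∃ x, x ≠ z ∧ dist x z < r := by
  obtain ⟨x, hx, hxz⟩ := nhdsWithin_basis_ball.neBot_iff.1 ‹(𝓝[≠] z).NeBot› hr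
  exact ⟨x, hxz, hx⟩

theorem exists_ne_and_ne {Z : Type*} [TopologicalSpace Z] [T1Space Z] (a b : Z) [(𝓝[≠] a).NeBot] :
    ∃ c, c ≠ a ∧ c ≠ b := by
  obtain ⟨c, -, hc⟩ := ((infinite_of_mem_nhds a univ_mem).sdiff (toFinite {a, b})).nonempty
  simp only [mem_insert_iff, mem_singleton_iff, not_or] at hc
  exact ⟨c, hc⟩

theorem NNReal.homeomorph_map_zero (η : ℝ≥0 ≃ₜ ℝ≥0) : η 0 = 0 := by
  rcases η.continuous.strictMono_of_inj η.injective with hmono | hanti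
  · exact (hmono.orderIsoOfSurjective η η.surjective).map_bot
  · obtain ⟨x, hx⟩ := η.surjective 0
    exact absurd (hanti (lt_add_one x)) (by simp [hx])

theorem coe_crossRatio {Z : Type*} [MetricSpace Z] (a b c d : Z) :
    (crossRatio a b c d : ℝ) = dist a c * dist b d / (dist a d * dist b c) := by
  simp [crossRatio, NNReal.coe_div, NNReal.coe_mul, coe_nndist]

theorem crossRatio_le_of_le_dist {Z : Type*} [MetricSpace Z] [BoundedSpace Z]
    {w₁ w₂ x z : Z} {s : ℝ} (hs : 0 < s) (hw₁ : s ≤ dist w₁ z) (hw₂ : s ≤ dist w₂ z)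
    (hx : dist x z ≤ s / 2) :
    (crossRatio w₁ x w₂ z : ℝ) ≤ 2 * diam (univ : Set Z) * dist x z / s ^ 2 := by
  have hxw₂ : s / 2 ≤ dist x w₂ := by linarith [dist_triangle_left w₂ z x]
  rw [coe_crossRatio]
  calc dist w₁ w₂ * dist x z / (dist w₁ z * dist x w₂)
      ≤ diam (univ : Set Z) * dist x z / (s * (s / 2)) := by
        gcongr
        exact dist_le_diam_of_mem (Bornology.isBounded_univ.2 ‹_›) trivial trivial
    _ = 2 * diam (univ : Set Z) * dist x z / s ^ 2 := by
        field_simp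

theorem IsQuasiMobius.dist_mul_dist_le {X Y : Type*} [MetricSpace X] [MetricSpace Y]
    [BoundedSpace Y] {η : ℝ≥0 ≃ₜ ℝ≥0} {f : X → Y} (hf : IsQuasiMobius η f)
    (hinj : Function.Injective f) {w₁ w₂ x z : X} (h₁₂ : w₁ ≠ w₂) (h₁x : w₁ ≠ x)
    (h₁z : w₁ ≠ z) (h₂x : w₂ ≠ x) (h₂z : w₂ ≠ z) (hxz : x ≠ z) :
    dist (f w₁) (f w₂) * dist (f x) (f z) ≤
      η (crossRatio w₁ x w₂ z) * diam (univ : Set Y) ^ 2 := by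
  have hbdd : ∀ a b : Y, dist a b ≤ diam (univ : Set Y) := fun a b =>
    dist_le_diam_of_mem (Bornology.isBounded_univ.2 ‹_›) trivial trivial
  have hpos₁ : 0 < dist (f w₁) (f z) := dist_pos.2 (hinj.ne h₁z)
  have hpos₂ : 0 < dist (f x) (f w₂) := dist_pos.2 (hinj.ne h₂x.symm)
  have hcr : (crossRatio (f w₁) (f x) (f w₂) (f z) : ℝ) ≤ η (crossRatio w₁ x w₂ z) :=
    NNReal.coe_le_coe.2 (hf w₁ x w₂ z h₁x h₁₂ h₁z h₂x.symm hxz h₂z)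
  rw [coe_crossRatio, div_le_iff₀ (by positivity)] at hcr
  calc dist (f w₁) (f w₂) * dist (f x) (f z)
      ≤ η (crossRatio w₁ x w₂ z) * (dist (f w₁) (f z) * dist (f x) (f w₂)) := hcr
    _ ≤ η (crossRatio w₁ x w₂ z) * diam (univ : Set Y) ^ 2 := by
        rw [sq]; gcongr <;> exact hbdd _ _

theorem exists_smul_dist_lt_of_le_dist {Z : Type*} [MetricSpace Z] [BoundedSpace Z]
    {G : Type*} [Group G] [MulAction G Z] {η : ℝ≥0 ≃ₜ ℝ≥0}
    (hqm : ∀ g : G, IsQuasiMobius η fun z : Z => g • z) {δ : ℝ} (hδ : 0 < δ)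
    (hpair : ∀ z₁ z₂ : Z, z₁ ≠ z₂ → ∃ g : G, δ ≤ dist (g • z₁) (g • z₂))
    (z : Z) [(𝓝[≠] z).NeBot] {ε : ℝ} (hε : 0 < ε) :
    ∃ h : G, ∀ w₁ w₂ : Z, ε ≤ dist w₁ z → ε ≤ dist w₂ z → dist (h • w₁) (h • w₂) < δ := by
  set D := diam (univ : Set Z)
  have hη : Tendsto (fun u => (η u : ℝ)) (𝓝 0) (𝓝 0) := by
    exact (NNReal.continuous_coe.comp η.continuous).tendsto' 0 0 (by simp [NNReal.homeomorph_map_zero])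
  obtain ⟨t, ht, hηt⟩ := NNReal.nhds_zero_basis.eventually_iff.1
    (hη.eventually (gt_mem_nhds (show 0 < δ ^ 2 / (D ^ 2 + 1) by positivity)))
  have hD : 0 ≤ D := diam_nonneg
  obtain ⟨x, hxz, hx⟩ := exists_ne_dist_lt z
    (show 0 < min (ε / 2) (t * ε ^ 2 / (2 * (D + 1))) by positivity)
  have hx₁ : dist x z < ε / 2 := hx.trans_le (min_le_left _ _)
  have hx₂ : dist x z * (2 * (D + 1)) < t * ε ^ 2 :=
    (lt_div_iff₀ (by positivity)).1 (hx.trans_le (min_le_right _ _))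
  obtain ⟨h, hh⟩ := hpair x z hxz
  refine ⟨h, fun w₁ w₂ hw₁ hw₂ => ?_⟩
  rcases eq_or_ne w₁ w₂ with rfl | h₁₂
  · simpa using hδ
  have hfar : ∀ w, ε ≤ dist w z → w ≠ x ∧ w ≠ z := fun w hw =>
    ⟨by rintro rfl; linarith, by rintro rfl; rw [dist_self] at hw; linarith⟩
  have hcr : crossRatio w₁ x w₂ z < t := by
    rw [← NNReal.coe_lt_coe]
    calc (crossRatio w₁ x w₂ z : ℝ) ≤ 2 * D * dist x z / ε ^ 2 :=
          crossRatio_le_of_le_dist hε hw₁ hw₂ hx₁.le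
      _ < t := by
          rw [div_lt_iff₀ (by positivity)]
          nlinarith [dist_nonneg (x := x) (y := z)]
  have hmoved := (hqm h).dist_mul_dist_le (MulAction.injective h) h₁₂ (hfar w₁ hw₁).1
    (hfar w₁ hw₁).2 (hfar w₂ hw₂).1 (hfar w₂ hw₂).2 hxz
  have hsmall : dist (h • w₁) (h • w₂) * δ < δ * δ :=
    calc dist (h • w₁) (h • w₂) * δ ≤ dist (h • w₁) (h • w₂) * dist (h • x) (h • z) := by
          gcongr
      _ ≤ η (crossRatio w₁ x w₂ z) * D ^ 2 := hmoved
      _ ≤ δ ^ 2 / (D ^ 2 + 1) * D ^ 2 := by gcongr; exact (hηt hcr).le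
      _ < δ * δ := by
          rw [div_mul_eq_mul_div, div_lt_iff₀ (by positivity)]
          nlinarith [pow_pos hδ 2]
  exact lt_of_mul_lt_mul_right hsmall hδ.le

theorem minimal_of_cocompact_on_triples_general
    {Z : Type*} [MetricSpace Z] [CompactSpace Z]
    (hup : ∃ lam : ℝ, 1 < lam ∧ ∀ (a : Z) (R : ℝ), 0 < R →
      R ≤ Metric.diam (Set.univ : Set Z) →
      (Metric.ball a R \ Metric.ball a (R / lam)).Nonempty)
    {G : Type*} [Group G] [MulAction G Z]
    (η : ℝ≥0 ≃ₜ ℝ≥0) (hqm : ∀ g : G, IsQuasiMobius η fun z : Z => g • z)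
    (hfree : ∀ z : Z, ∃ g : G, g • z ≠ z)
    (hcocpt : ∃ δ : ℝ, 0 < δ ∧ ∀ z₁ z₂ z₃ : Z, z₁ ≠ z₂ → z₁ ≠ z₃ → z₂ ≠ z₃ →
      ∃ g : G, δ ≤ dist (g • z₁) (g • z₂) ∧ δ ≤ dist (g • z₁) (g • z₃) ∧
        δ ≤ dist (g • z₂) (g • z₃))
    : ∀ (z z' : Z) (ε : ℝ), 0 < ε → ∃ g : G, dist (g • z') z < ε := by
  intro z z' ε hε
  obtain ⟨δ, hδ, hsep⟩ := hcocpt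
  obtain ⟨g₀, hg₀⟩ := hfree z'
  have : Nontrivial Z := ⟨⟨_, _, hg₀⟩⟩
  have := UniformlyPerfect.nhdsNE_neBot hup
  have hpair : ∀ z₁ z₂ : Z, z₁ ≠ z₂ → ∃ g : G, δ ≤ dist (g • z₁) (g • z₂) := by
    intro z₁ z₂ h₁₂
    obtain ⟨z₃, h₃₁, h₃₂⟩ := exists_ne_and_ne z₁ z₂
    obtain ⟨g, hg, -⟩ := hsep z₁ z₂ z₃ h₁₂ h₃₁.symm h₃₂.symm
    exact ⟨g, hg⟩
  obtain ⟨h, hh⟩ := exists_smul_dist_lt_of_le_dist hqm hδ hpair z hε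
  obtain ⟨u, hu⟩ := hpair _ _ hg₀
  by_contra! hfar
  have hclose := hh _ _ (hfar (h⁻¹ * u * g₀)) (hfar (h⁻¹ * u))
  simp only [smul_smul, ← mul_assoc, mul_inv_cancel, one_mul] at hclose hu
  linarith

theorem minimal_of_cocompact_on_triples
    {Z : Type*} [MetricSpace Z] [CompactSpace Z]
    (hup : ∃ lam : ℝ, 1 < lam ∧ ∀ (a : Z) (R : ℝ), 0 < R →
      R ≤ Metric.diam (Set.univ : Set Z) →
      (Metric.ball a R \ Metric.ball a (R / lam)).Nonempty)
    {G : Type*} [Group G] [MulAction G Z]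
    (hcont : ∀ g : G, Continuous fun z : Z => g • z)
    (η : ℝ≥0 ≃ₜ ℝ≥0) (hqm : ∀ g : G, IsQuasiMobius η fun z : Z => g • z)
    (hfree : ∀ z : Z, ∃ g : G, g • z ≠ z)
    (hcocpt : ∃ δ : ℝ, 0 < δ ∧ ∀ z₁ z₂ z₃ : Z, z₁ ≠ z₂ → z₁ ≠ z₃ → z₂ ≠ z₃ →
      ∃ g : G, δ ≤ dist (g • z₁) (g • z₂) ∧ δ ≤ dist (g • z₁) (g • z₃) ∧
        δ ≤ dist (g • z₂) (g • z₃))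
    : ∀ (z z' : Z) (ε : ℝ), 0 < ε → ∃ g : G, dist (g • z') z < ε :=
  minimal_of_cocompact_on_triples_general hup η hqm hfree hcocpt
end

section
/- Let (Z,d,μ) be a separable locally compact metric measure space and Q ≥ 1. The composition of any embedding [0,1]→[0,1] with a thick path in Z is a thick path: if γ ∈ C([0,1],Z) is thick and α:[0,1]→[0,1] is a topological embedding, then γ∘α is thick. -/
open Metric Set MeasureTheory Filter Topology unitInterval
open scoped NNReal ENNReal

noncomputable section AuxThick
open unitInterval

namespace ThickAux

local instance fact01 : Fact ((0:ℝ) ≤ 1) := ⟨zero_le_one⟩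

variable {Z : Type*} [MetricSpace Z]

/-- Clamp a real number into the unit interval. -/
def pI : ℝ → unitInterval := Set.projIcc (0:ℝ) 1 zero_le_one

lemma pI_coe (x : unitInterval) : pI (x : ℝ) = x := Set.projIcc_val zero_le_one x

lemma coe_pI_of_mem {t : ℝ} (h0 : 0 ≤ t) (h1 : t ≤ 1) : (pI t : ℝ) = t := by
  rw [pI, Set.projIcc_of_mem zero_le_one ⟨h0, h1⟩]

lemma pI_mono : Monotone pI := Set.monotone_projIcc zero_le_one

lemma pI_cont : Continuous pI := continuous_projIcc

lemma pI_of_nonpos {t : ℝ} (h : t ≤ 0) : pI t = 0 := by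
  rw [pI, Set.projIcc_of_le_left zero_le_one h]; rfl

lemma pI_of_one_le {t : ℝ} (h : 1 ≤ t) : pI t = 1 := by
  rw [pI, Set.projIcc_of_right_le zero_le_one h]; rfl

lemma coe_pI_le {t : ℝ} (h : 0 ≤ t) : (pI t : ℝ) ≤ t := by
  rcases le_or_gt t 1 with h1 | h1
  · rw [coe_pI_of_mem h h1]
  · rw [pI_of_one_le h1.le]; exact h1.le

lemma le_coe_pI {t : ℝ} (h : t ≤ 1) : t ≤ (pI t : ℝ) := by
  rcases le_or_gt 0 t with h0 | h0
  · rw [coe_pI_of_mem h0 h]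
  · rw [pI_of_nonpos h0.le]; exact h0.le

lemma le_pI_iff {t : ℝ} (h : 0 ≤ t) {s : unitInterval} : s ≤ pI t ↔ (s : ℝ) ≤ t := by
  rcases le_or_gt t 1 with h1 | h1
  · rw [← Subtype.coe_le_coe, coe_pI_of_mem h h1]
  · rw [pI_of_one_le h1.le]
    exact iff_of_true le_one' (s.2.2.trans h1.le)

lemma evar_setOf (f : unitInterval → Z) (t : ℝ) :
    eVariationOn f {s : unitInterval | (s : ℝ) ≤ t} = eVariationOn f (Set.Icc 0 (pI t)) := by
  rcases lt_or_ge t 0 with h | h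
  · rw [eVariationOn.subsingleton f (s := {s : unitInterval | (s : ℝ) ≤ t}),
      eVariationOn.subsingleton f (s := Set.Icc 0 (pI t))]
    · rw [pI_of_nonpos h.le, Set.Icc_self]
      exact Set.subsingleton_singleton
    · intro a ha b hb
      exact absurd (le_trans a.2.1 ha) (not_le.mpr h)
  · congr 1
    ext s
    simp only [Set.mem_setOf_eq, Set.mem_Icc]
    exact ⟨fun hs => ⟨nonneg', (le_pI_iff h).mpr hs⟩, fun hs => (le_pI_iff h).mp hs.2⟩

lemma pathVar_eq (β : C(unitInterval, Z)) (t : ℝ) :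
    pathVar β t = (eVariationOn β (Set.Icc 0 (pI t))).toReal := by
  rw [pathVar, evar_setOf]

lemma pathVar_coe (β : C(unitInterval, Z)) (x : unitInterval) :
    pathVar β (x : ℝ) = (eVariationOn β (Set.Icc 0 x)).toReal := by
  rw [pathVar_eq, pI_coe]

lemma evar_ne_top {β : C(unitInterval, Z)} (hβ : pathLength β < ⊤) (s : Set unitInterval) :
    eVariationOn β s ≠ ⊤ :=
  (lt_of_le_of_lt (eVariationOn.mono _ (Set.subset_univ s)) hβ).ne

lemma pathVar_mono {β : C(unitInterval, Z)} (hβ : pathLength β < ⊤) : Monotone (pathVar β) := by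
  intro a b hab
  rw [pathVar_eq, pathVar_eq]
  exact ENNReal.toReal_mono (evar_ne_top hβ _)
    (eVariationOn.mono _ (Set.Icc_subset_Icc le_rfl (pI_mono hab)))

lemma evar_Icc_add_Icc (β : C(unitInterval, Z)) {x y z : unitInterval} (hxy : x ≤ y)
    (hyz : y ≤ z) :
    eVariationOn β (Set.Icc x y) + eVariationOn β (Set.Icc y z) = eVariationOn β (Set.Icc x z) := by
  have := eVariationOn.Icc_add_Icc (β : unitInterval → Z) (s := Set.univ) hxy hyz (Set.mem_univ y)
  simpa using this

lemma pathVar_add {β : C(unitInterval, Z)} (hβ : pathLength β < ⊤) {x y : unitInterval}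
    (hxy : x ≤ y) :
    pathVar β x + (eVariationOn β (Set.Icc x y)).toReal = pathVar β y := by
  rw [pathVar_coe, pathVar_coe, ← ENNReal.toReal_add (evar_ne_top hβ _) (evar_ne_top hβ _),
    evar_Icc_add_Icc β nonneg' hxy]


section Continuity
open Filter Topology

lemma tendsto_right (β : C(unitInterval, Z)) (hβ : pathLength β < ⊤) (x₀ : unitInterval) :
    Filter.Tendsto (fun x => eVariationOn β (Set.Icc x₀ x)) (nhdsWithin x₀ (Set.Ici x₀))
      (nhds 0) := by
  rw [ENNReal.tendsto_nhds_zero]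
  intro ε hε
  rcases le_or_gt (eVariationOn (β : unitInterval → Z) (Set.Icc x₀ 1)) ε with hT | hT
  · filter_upwards [self_mem_nhdsWithin] with x _
    exact le_trans (eVariationOn.mono _ (Set.Icc_subset_Icc le_rfl le_one')) hT
  have hTne : eVariationOn (β : unitInterval → Z) (Set.Icc x₀ 1) ≠ ⊤ := evar_ne_top hβ _
  have hε2 : (0 : ℝ≥0∞) < ε / 2 := ENNReal.half_pos hε.ne'
  have hsub : eVariationOn (β : unitInterval → Z) (Set.Icc x₀ 1) - ε / 2
      < eVariationOn (β : unitInterval → Z) (Set.Icc x₀ 1) :=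
    ENNReal.sub_lt_self hTne (lt_of_le_of_lt zero_le hT).ne' hε2.ne'
  obtain ⟨⟨n, ⟨u, hu, us⟩⟩, hS⟩ :
      ∃ p : ℕ × { u : ℕ → unitInterval // Monotone u ∧ ∀ i, u i ∈ Set.Icc x₀ 1 },
        eVariationOn (β : unitInterval → Z) (Set.Icc x₀ 1) - ε / 2
          < ∑ i ∈ Finset.range p.1, edist (β ((p.2 : ℕ → unitInterval) (i + 1)))
              (β ((p.2 : ℕ → unitInterval) i)) :=
    lt_iSup_iff.mp hsub
  by_cases hPex : ∃ i, x₀ < u i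
  case neg =>
    push_neg at hPex
    exfalso
    have hzero : ∀ i ∈ Finset.range n, edist (β (u (i + 1))) (β (u i)) = 0 := by
      intro i _
      have h1 : u (i + 1) = x₀ := le_antisymm (hPex _) (us _).1
      have h2 : u i = x₀ := le_antisymm (hPex _) (us _).1
      rw [h1, h2, edist_self]
    rw [Finset.sum_eq_zero hzero] at hS
    exact (zero_le).not_gt hS
  case pos =>
    have hm : x₀ < u (Nat.find hPex) := Nat.find_spec hPex
    set m := Nat.find hPex with hmdef
    have hbefore : ∀ i, i < m → u i = x₀ := fun i hi =>
      le_antisymm (not_lt.mp (Nat.find_min hPex hi)) (us i).1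
    have hmn : m ≤ n := by
      by_contra hmn
      push_neg at hmn
      have hzero : ∀ i ∈ Finset.range n, edist (β (u (i + 1))) (β (u i)) = 0 := by
        intro i hi
        rw [Finset.mem_range] at hi
        rw [hbefore (i + 1) (by omega), hbefore i (by omega), edist_self]
      rw [Finset.sum_eq_zero hzero] at hS
      exact (zero_le).not_gt hS
    have hev1 : ∀ᶠ x in nhdsWithin x₀ (Set.Ici x₀), x < u m := by
      have h1 : ∀ᶠ x in nhds x₀, x ∈ Set.Iio (u m) :=
        (isOpen_Iio (a := u m)).eventually_mem hm
      exact h1.filter_mono nhdsWithin_le_nhds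
    have hev2 : ∀ᶠ x in nhdsWithin x₀ (Set.Ici x₀), edist (β x) (β x₀) < ε / 2 :=
      ((EMetric.tendsto_nhds.mp (β.continuous.tendsto x₀)) (ε / 2) hε2).filter_mono
        nhdsWithin_le_nhds
    filter_upwards [hev1, hev2, self_mem_nhdsWithin] with x hx1 hx2 hx0
    set w : ℕ → unitInterval := fun i => if i = 0 then x else u (i + m - 1) with hwdef
    have hw_apply : ∀ i, w (i + 1) = u (i + m) := by
      intro i
      simp only [hwdef, if_neg (Nat.succ_ne_zero i)]
      congr 1
      omega
    have hw0 : w 0 = x := by simp [hwdef]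
    have hw_ge : ∀ i, 1 ≤ i → x ≤ u (i + m - 1) :=
      fun i hi => le_trans hx1.le (hu (by omega))
    have hw_mono : Monotone w := by
      intro i j hij
      rcases Nat.eq_zero_or_pos i with hi | hi
      · subst hi
        rcases Nat.eq_zero_or_pos j with hj | hj
        · subst hj; exact le_rfl
        · rw [hw0, hwdef]
          simp only [if_neg (by omega : ¬ j = 0)]
          exact hw_ge j hj
      · have hj : 1 ≤ j := le_trans hi hij
        simp only [hwdef, if_neg (by omega : ¬ i = 0), if_neg (by omega : ¬ j = 0)]
        exact hu (by omega)
    have hw_mem : ∀ i, w i ∈ Set.Icc x (1 : unitInterval) := by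
      intro i
      rcases Nat.eq_zero_or_pos i with hi | hi
      · subst hi; rw [hw0]; exact ⟨le_rfl, le_one'⟩
      · simp only [hwdef, if_neg (by omega : ¬ i = 0)]
        exact ⟨hw_ge i hi, (us _).2⟩
    have hsum_le : ∑ i ∈ Finset.range (n - m + 1), edist (β (w (i + 1))) (β (w i))
        ≤ eVariationOn β (Set.Icc x 1) := eVariationOn.sum_le hw_mono hw_mem
    have hsum_w : ∑ i ∈ Finset.range (n - m + 1), edist (β (w (i + 1))) (β (w i))
        = edist (β (u m)) (β x)
          + ∑ i ∈ Finset.range (n - m), edist (β (u (i + m + 1))) (β (u (i + m))) := by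
      rw [Finset.sum_range_succ']
      rw [add_comm]
      congr 1
      · rw [hw_apply 0, hw0, Nat.zero_add]
      · apply Finset.sum_congr rfl
        intro i _
        have h1 : i + 1 + m = i + m + 1 := by omega
        rw [hw_apply (i + 1), hw_apply i, h1]
    have hS_split : ∑ i ∈ Finset.range n, edist (β (u (i + 1))) (β (u i))
        ≤ edist (β (u m)) (β x₀)
          + ∑ i ∈ Finset.range (n - m), edist (β (u (i + m + 1))) (β (u (i + m))) := by
      have hsplit2 : ∑ i ∈ Finset.range n, edist (β (u (i + 1))) (β (u i))
          = ∑ i ∈ Finset.Ico 0 m, edist (β (u (i + 1))) (β (u i))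
            + ∑ i ∈ Finset.Ico m n, edist (β (u (i + 1))) (β (u i)) := by
        rw [Finset.sum_Ico_consecutive _ (Nat.zero_le m) hmn, Finset.range_eq_Ico]
      rw [hsplit2]
      apply add_le_add
      · rcases Nat.eq_zero_or_pos m with hm0 | hm0
        · simp [hm0]
        · obtain ⟨k, hk⟩ : ∃ k, m = k + 1 := ⟨m - 1, by omega⟩
          rw [hk, show Finset.Ico 0 (k+1) = Finset.range (k+1) from (Finset.range_eq_Ico _).symm,
            Finset.sum_range_succ]
          have hzero : ∀ i ∈ Finset.range k, edist (β (u (i + 1))) (β (u i)) = 0 := by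
            intro i hi
            rw [Finset.mem_range] at hi
            rw [hbefore (i + 1) (by omega), hbefore i (by omega), edist_self]
          rw [Finset.sum_eq_zero hzero, zero_add, hbefore k (by omega), ← hk]
      · rw [Finset.sum_Ico_eq_sum_range]
        apply le_of_eq
        apply Finset.sum_congr rfl
        intro i _
        have h1 : m + i + 1 = i + m + 1 := by omega
        have h2 : m + i = i + m := by omega
        rw [h1, h2]
    have hTle : eVariationOn β (Set.Icc x₀ 1)
        ≤ (∑ i ∈ Finset.range n, edist (β (u (i + 1))) (β (u i))) + ε / 2 :=
      tsub_le_iff_right.mp hS.le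
    have hsub_le : edist (β (u m)) (β x)
          + ∑ i ∈ Finset.range (n - m), edist (β (u (i + m + 1))) (β (u (i + m)))
        ≤ eVariationOn β (Set.Icc x 1) := le_trans (le_of_eq hsum_w.symm) hsum_le
    have hsplitT : eVariationOn β (Set.Icc x₀ x) + eVariationOn β (Set.Icc x 1)
        = eVariationOn β (Set.Icc x₀ 1) := evar_Icc_add_Icc β hx0 le_one'
    have hfin : eVariationOn (β : unitInterval → Z) (Set.Icc x 1) ≠ ⊤ := evar_ne_top hβ _
    have hmain : eVariationOn β (Set.Icc x₀ x) + eVariationOn β (Set.Icc x 1)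
        ≤ (edist (β x) (β x₀) + ε / 2) + eVariationOn β (Set.Icc x 1) := by
      rw [hsplitT]
      calc eVariationOn β (Set.Icc x₀ 1)
          ≤ (∑ i ∈ Finset.range n, edist (β (u (i + 1))) (β (u i))) + ε / 2 := hTle
        _ ≤ (edist (β (u m)) (β x₀)
              + ∑ i ∈ Finset.range (n - m), edist (β (u (i + m + 1))) (β (u (i + m)))) + ε / 2 :=
            add_le_add_left hS_split _
        _ ≤ ((edist (β (u m)) (β x) + edist (β x) (β x₀))
              + ∑ i ∈ Finset.range (n - m), edist (β (u (i + m + 1))) (β (u (i + m)))) + ε / 2 := by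
            gcongr
            exact edist_triangle _ _ _
        _ = (edist (β x) (β x₀) + ε / 2)
              + (edist (β (u m)) (β x)
                + ∑ i ∈ Finset.range (n - m), edist (β (u (i + m + 1))) (β (u (i + m)))) := by
            ring
        _ ≤ (edist (β x) (β x₀) + ε / 2) + eVariationOn β (Set.Icc x 1) := by
            gcongr
    calc eVariationOn β (Set.Icc x₀ x) ≤ edist (β x) (β x₀) + ε / 2 :=
        (ENNReal.add_le_add_iff_right hfin).mp hmain
      _ ≤ ε / 2 + ε / 2 := add_le_add_left hx2.le _
      _ = ε := ENNReal.add_halves ε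

def σm : C(unitInterval, unitInterval) := ⟨unitInterval.symm, unitInterval.continuous_symm⟩

lemma symm_image_Icc (x y : unitInterval) :
    unitInterval.symm '' Set.Icc x y = Set.Icc (σ y) (σ x) := by
  ext s
  constructor
  · rintro ⟨t, ⟨ht1, ht2⟩, rfl⟩
    exact ⟨strictAnti_symm.antitone ht2, strictAnti_symm.antitone ht1⟩
  · rintro ⟨h1, h2⟩
    refine ⟨σ s, ⟨?_, ?_⟩, symm_symm s⟩
    · have := strictAnti_symm.antitone h2
      rwa [symm_symm] at this
    · have := strictAnti_symm.antitone h1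
      rwa [symm_symm] at this

lemma pathLength_comp_symm (β : C(unitInterval, Z)) :
    pathLength (β.comp σm) = pathLength β := by
  rw [pathLength, pathLength, ContinuousMap.coe_comp]
  rw [show (⇑σm : unitInterval → unitInterval) = unitInterval.symm from rfl]
  rw [eVariationOn.comp_eq_of_antitoneOn (β : unitInterval → Z) unitInterval.symm
    (strictAnti_symm.antitone.antitoneOn _), Set.image_univ, symm_involutive.surjective.range_eq]

lemma tendsto_left (β : C(unitInterval, Z)) (hβ : pathLength β < ⊤) (x₀ : unitInterval) :
    Filter.Tendsto (fun x => eVariationOn β (Set.Icc x x₀)) (nhdsWithin x₀ (Set.Iic x₀))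
      (nhds 0) := by
  have hβσ : pathLength (β.comp σm) < ⊤ := by rw [pathLength_comp_symm]; exact hβ
  have hcomp : ∀ x : unitInterval, eVariationOn (β : unitInterval → Z) (Set.Icc x x₀)
      = eVariationOn (β.comp σm : unitInterval → Z) (Set.Icc (σ x₀) (σ x)) := by
    intro x
    rw [ContinuousMap.coe_comp,
      show (⇑σm : unitInterval → unitInterval) = unitInterval.symm from rfl,
      eVariationOn.comp_eq_of_antitoneOn (β : unitInterval → Z) unitInterval.symm
        (strictAnti_symm.antitone.antitoneOn _),
      symm_image_Icc, symm_symm, symm_symm]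
  have htends : Filter.Tendsto (fun x : unitInterval => σ x) (nhdsWithin x₀ (Set.Iic x₀))
      (nhdsWithin (σ x₀) (Set.Ici (σ x₀))) := by
    rw [tendsto_nhdsWithin_iff]
    constructor
    · exact (unitInterval.continuous_symm.tendsto x₀).mono_left nhdsWithin_le_nhds
    · filter_upwards [self_mem_nhdsWithin] with x hx
      exact strictAnti_symm.antitone hx
  have h := (tendsto_right (β.comp σm) hβσ (σ x₀)).comp htends
  apply h.congr'
  filter_upwards [self_mem_nhdsWithin] with x _
  exact (hcomp x).symm

lemma pathVar_continuous (β : C(unitInterval, Z)) (hβ : pathLength β < ⊤) :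
    Continuous (pathVar β) := by
  have hV : Continuous fun x : unitInterval => eVariationOn β (Set.Icc 0 x) := by
    rw [continuous_iff_continuousAt]
    intro x₀
    rw [ContinuousAt, ← nhdsLE_sup_nhdsGE x₀, Filter.tendsto_sup]
    constructor
    · have h0 : Filter.Tendsto
          (fun x : unitInterval => eVariationOn β (Set.Icc 0 x₀) - eVariationOn β (Set.Icc x x₀))
          (nhdsWithin x₀ (Set.Iic x₀)) (nhds (eVariationOn β (Set.Icc 0 x₀) - 0)) :=
        ENNReal.Tendsto.sub tendsto_const_nhds (tendsto_left β hβ x₀)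
          (Or.inl (evar_ne_top hβ _))
      rw [tsub_zero] at h0
      apply h0.congr'
      filter_upwards [self_mem_nhdsWithin] with x hx
      rw [← evar_Icc_add_Icc β (nonneg' : (0:unitInterval) ≤ x) hx,
        ENNReal.add_sub_cancel_right (evar_ne_top hβ _)]
    · have h0 : Filter.Tendsto
          (fun x : unitInterval => eVariationOn β (Set.Icc 0 x₀) + eVariationOn β (Set.Icc x₀ x))
          (nhdsWithin x₀ (Set.Ici x₀)) (nhds (eVariationOn β (Set.Icc 0 x₀) + 0)) :=
        Filter.Tendsto.add tendsto_const_nhds (tendsto_right β hβ x₀)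
      rw [add_zero] at h0
      apply h0.congr'
      filter_upwards [self_mem_nhdsWithin] with x hx
      exact evar_Icc_add_Icc β nonneg' hx
  have heq : pathVar β = fun t => (eVariationOn β (Set.Icc 0 (pI t))).toReal :=
    funext (pathVar_eq β)
  rw [heq, continuous_iff_continuousAt]
  intro t
  exact (ENNReal.tendsto_toReal (evar_ne_top hβ _)).comp ((hV.comp pI_cont).continuousAt)

end Continuity


section Stieltjes
open Filter Topology MeasureTheory

lemma rightLim_of_continuous {f : ℝ → ℝ} (hc : Continuous f) (x : ℝ) :
    Function.rightLim f x = f x :=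
  rightLim_eq_of_tendsto
    ((hc.tendsto x).mono_left nhdsWithin_le_nhds)

lemma leftLim_of_continuous {f : ℝ → ℝ} (hc : Continuous f) (x : ℝ) :
    Function.leftLim f x = f x :=
  leftLim_eq_of_tendsto
    ((hc.tendsto x).mono_left nhdsWithin_le_nhds)

lemma stieltjes_apply {f : ℝ → ℝ} (hf : Monotone f) (hc : Continuous f) :
    ⇑hf.stieltjesFunction = f := by
  funext x
  rw [Monotone.stieltjesFunction_eq, rightLim_of_continuous hc]

lemma st_measure_Ioc {f : ℝ → ℝ} (hf : Monotone f) (hc : Continuous f) (a b : ℝ) :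
    hf.stieltjesFunction.measure (Set.Ioc a b) = ENNReal.ofReal (f b - f a) := by
  rw [StieltjesFunction.measure_Ioc, stieltjes_apply hf hc]

lemma st_measure_Ioo {f : ℝ → ℝ} (hf : Monotone f) (hc : Continuous f) (a b : ℝ) :
    hf.stieltjesFunction.measure (Set.Ioo a b) = ENNReal.ofReal (f b - f a) := by
  rw [StieltjesFunction.measure_Ioo, stieltjes_apply hf hc, leftLim_of_continuous hc]

lemma st_measure_Icc {f : ℝ → ℝ} (hf : Monotone f) (hc : Continuous f) (a b : ℝ) :
    hf.stieltjesFunction.measure (Set.Icc a b) = ENNReal.ofReal (f b - f a) := by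
  rw [StieltjesFunction.measure_Icc, stieltjes_apply hf hc, leftLim_of_continuous hc]

lemma lengthMeasure_eq {β : C(unitInterval, Z)} (h : Monotone (pathVar β)) :
    lengthMeasure β = h.stieltjesFunction.measure := by
  unfold lengthMeasure
  exact dif_pos h

end Stieltjes


section Core
open Filter Topology MeasureTheory

variable [MeasurableSpace Z] [BorelSpace Z]

set_option linter.unusedSectionVars false

lemma pathLength_comp_mono (β : C(unitInterval, Z)) (r : C(unitInterval, unitInterval))
    (hr : Monotone ⇑r ∨ Antitone ⇑r) : pathLength (β.comp r) ≤ pathLength β := by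
  rw [pathLength, pathLength, ContinuousMap.coe_comp]
  cases hr with
  | inl h =>
    exact eVariationOn.comp_le_of_monotoneOn _ _ (h.monotoneOn _) (Set.mapsTo_univ _ _)
  | inr h =>
    exact eVariationOn.comp_le_of_antitoneOn _ _ (h.antitoneOn _) (Set.mapsTo_univ _ _)

lemma image_Icc_of_mono {r : C(unitInterval, unitInterval)} (hr : StrictMono ⇑r)
    (x : unitInterval) : ⇑r '' Set.Icc 0 x = Set.Icc (r 0) (r x) := by
  apply Set.Subset.antisymm
  · rintro _ ⟨t, ⟨ht0, htx⟩, rfl⟩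
    exact ⟨hr.monotone ht0, hr.monotone htx⟩
  · exact intermediate_value_Icc (nonneg' : (0:unitInterval) ≤ x) r.continuous.continuousOn

lemma pathVar_comp_mono {β : C(unitInterval, Z)} (hβ : pathLength β < ⊤)
    {r : C(unitInterval, unitInterval)} (hr : StrictMono ⇑r) (t : ℝ) :
    pathVar β ((r 0 : unitInterval) : ℝ) + pathVar (β.comp r) t
      = pathVar β ((r (pI t) : unitInterval) : ℝ) := by
  have hc : pathVar (β.comp r) t = (eVariationOn β (Set.Icc (r 0) (r (pI t)))).toReal := by
    rw [pathVar_eq, ContinuousMap.coe_comp,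
      eVariationOn.comp_eq_of_monotoneOn (β : unitInterval → Z) ⇑r (hr.monotone.monotoneOn _),
      image_Icc_of_mono hr]
  rw [hc, pathVar_coe, pathVar_coe,
    ← ENNReal.toReal_add (evar_ne_top hβ _) (evar_ne_top hβ _),
    evar_Icc_add_Icc β nonneg' (hr.monotone nonneg')]

lemma core_mono (β : C(unitInterval, Z)) (hβ : pathLength β < ⊤)
    (r : C(unitInterval, unitInterval)) (hr : StrictMono ⇑r)
    (ρ : Z → ℝ≥0∞) (hρ : Measurable ρ) :
    pathIntegral ρ (β.comp r) ≤ pathIntegral ρ β := by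
  have hβr : pathLength (β.comp r) < ⊤ :=
    lt_of_le_of_lt (pathLength_comp_mono β r (Or.inl hr.monotone)) hβ
  have hmv : Monotone (pathVar β) := pathVar_mono hβ
  have hmw : Monotone (pathVar (β.comp r)) := pathVar_mono hβr
  have hcv : Continuous (pathVar β) := pathVar_continuous β hβ
  have hcw : Continuous (pathVar (β.comp r)) := pathVar_continuous _ hβr
  have hu01 : ((r 0 : unitInterval) : ℝ) ≤ ((r 1 : unitInterval) : ℝ) :=
    Subtype.coe_le_coe.mpr (hr.monotone le_one')
  have hmem : ∀ t : unitInterval, r t ∈ Set.Icc (r 0) (r 1) :=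
    fun t => ⟨hr.monotone nonneg', hr.monotone le_one'⟩
  -- the order isomorphism onto the image interval
  have hrs_mono : StrictMono (fun t => (⟨r t, hmem t⟩ : Set.Icc (r 0) (r 1))) :=
    fun a b hab => Subtype.mk_lt_mk.mpr (hr hab)
  have hrs_surj : Function.Surjective (fun t => (⟨r t, hmem t⟩ : Set.Icc (r 0) (r 1))) := by
    rintro ⟨y, hy1, hy2⟩
    obtain ⟨t, _, ht⟩ := intermediate_value_Icc (nonneg' : (0:unitInterval) ≤ 1)
      r.continuous.continuousOn (⟨hy1, hy2⟩ : y ∈ Set.Icc (r 0) (r 1))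
    exact ⟨t, Subtype.ext ht⟩
  set e := StrictMono.orderIsoOfSurjective _ hrs_mono hrs_surj with he
  have he_apply : ∀ t : unitInterval, (e t : unitInterval) = r t := fun t => by
    rw [he, StrictMono.coe_orderIsoOfSurjective]
  -- the clamping map into [r 0, r 1] ⊆ unitInterval
  have htoI : ∀ x : Set.Icc ((r 0 : unitInterval) : ℝ) ((r 1 : unitInterval) : ℝ),
      (⟨x.1, ⟨le_trans (r 0).2.1 x.2.1, le_trans x.2.2 (r 1).2.2⟩⟩ : unitInterval)
        ∈ Set.Icc (r 0) (r 1) := by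
    intro x
    constructor
    · exact Subtype.coe_le_coe.mp x.2.1
    · exact Subtype.coe_le_coe.mp x.2.2
  set toI : Set.Icc ((r 0 : unitInterval) : ℝ) ((r 1 : unitInterval) : ℝ) → Set.Icc (r 0) (r 1) :=
    fun x => ⟨_, htoI x⟩ with htoIdef
  have htoI_mono : Monotone toI := by
    intro x y hxy
    exact Subtype.mk_le_mk.mpr (Subtype.mk_le_mk.mpr hxy)
  have htoI_coe : ∀ x, ((toI x : unitInterval) : ℝ) = (x : ℝ) := fun x => rfl
  -- H : ℝ → ℝ
  set H : ℝ → ℝ := fun s =>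
    ((e.symm (toI (Set.projIcc _ _ hu01 s)) : unitInterval) : ℝ) with hHdef
  have hH_mono : Monotone H := by
    intro s s' hss
    exact Subtype.coe_le_coe.mpr (Subtype.coe_le_coe.mpr
      (e.symm.monotone (htoI_mono (Set.monotone_projIcc hu01 hss))))
  have hH_meas : Measurable H := hH_mono.measurable
  have hH_mem : ∀ s : ℝ, 0 ≤ H s ∧ H s ≤ 1 :=
    fun s => ⟨(e.symm _).2.1, (e.symm _).2.2⟩
  have hH_le : ∀ (x : unitInterval) (s : ℝ), s ∈ Set.Icc ((r 0 : unitInterval) : ℝ)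
      ((r 1 : unitInterval) : ℝ) → (H s ≤ (x : ℝ) ↔ s ≤ ((r x : unitInterval) : ℝ)) := by
    intro x s hs
    have h1 : H s ≤ (x : ℝ) ↔ e.symm (toI (Set.projIcc _ _ hu01 s)) ≤ x := Subtype.coe_le_coe
    have h2 : e.symm (toI (Set.projIcc _ _ hu01 s)) ≤ x ↔ toI (Set.projIcc _ _ hu01 s) ≤ e x :=
      OrderIso.symm_apply_le e
    have h3 : toI (Set.projIcc _ _ hu01 s) ≤ e x
        ↔ ((toI (Set.projIcc _ _ hu01 s) : unitInterval) : ℝ) ≤ ((e x : unitInterval) : ℝ) := by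
      rw [Subtype.coe_le_coe, Subtype.coe_le_coe]
    rw [h1, h2, h3, he_apply x, htoI_coe, Set.projIcc_of_mem hu01 hs]
  have hr_pI_mem : ∀ t : ℝ, ((r (pI t) : unitInterval) : ℝ) ∈
      Set.Icc ((r 0 : unitInterval) : ℝ) ((r 1 : unitInterval) : ℝ) :=
    fun t => ⟨Subtype.coe_le_coe.mpr (hr.monotone nonneg'),
      Subtype.coe_le_coe.mpr (hr.monotone le_one')⟩
  -- finiteness of the Stieltjes measure of the reparametrized path
  have hSw_coe : ⇑hmw.stieltjesFunction = pathVar (β.comp r) := stieltjes_apply hmw hcw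
  have hw_bot : ∀ t : ℝ, t ≤ 0 → pathVar (β.comp r) t = 0 := by
    intro t ht
    rw [pathVar_eq, pI_of_nonpos ht, Set.Icc_self,
      eVariationOn.subsingleton _ Set.subsingleton_singleton]
    rfl
  have htb : Tendsto (pathVar (β.comp r)) atBot (nhds 0) := by
    apply Filter.Tendsto.congr' _ (tendsto_const_nhds (α := ℝ))
    filter_upwards [Filter.eventually_le_atBot (0:ℝ)] with t ht
    exact (hw_bot t ht).symm
  have htt : Tendsto (pathVar (β.comp r)) atTop (nhds (pathVar (β.comp r) 1)) := by
    apply Filter.Tendsto.congr' _ (tendsto_const_nhds (α := ℝ))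
    filter_upwards [Filter.eventually_ge_atTop (1:ℝ)] with t ht
    have heq1 : pathVar (β.comp r) t = pathVar (β.comp r) 1 := by
      rw [pathVar_eq, pathVar_eq, pI_of_one_le ht, pI_of_one_le le_rfl]
    exact heq1.symm
  haveI hWfin : IsFiniteMeasure hmw.stieltjesFunction.measure := by
    constructor
    rw [hmw.stieltjesFunction.measure_univ (l := 0) (u := pathVar (β.comp r) 1)
      (by rw [hSw_coe]; exact htb) (by rw [hSw_coe]; exact htt)]
    exact ENNReal.ofReal_lt_top
  -- the main measure identity
  have hmap : hmw.stieltjesFunction.measure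
      = (hmv.stieltjesFunction.measure.restrict
          (Set.Icc ((r 0 : unitInterval) : ℝ) ((r 1 : unitInterval) : ℝ))).map H := by
    refine Measure.ext_of_Ioc _ _ (fun a b hab => ?_)
    rw [st_measure_Ioc hmw hcw, Measure.map_apply hH_meas measurableSet_Ioc,
      Measure.restrict_apply (hH_meas measurableSet_Ioc)]
    have hsand1 : Set.Ioo ((r (pI a) : unitInterval) : ℝ) ((r (pI b) : unitInterval) : ℝ)
        ⊆ H ⁻¹' (Set.Ioc a b) ∩ Set.Icc ((r 0 : unitInterval) : ℝ)
          ((r 1 : unitInterval) : ℝ) := by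
      intro s hs
      have hsmem : s ∈ Set.Icc ((r 0 : unitInterval) : ℝ) ((r 1 : unitInterval) : ℝ) :=
        ⟨le_trans (hr_pI_mem a).1 hs.1.le, le_trans hs.2.le (hr_pI_mem b).2⟩
      refine ⟨⟨?_, ?_⟩, hsmem⟩
      · -- a < H s
        rcases le_or_gt a 1 with ha1 | ha1
        · by_contra hcon
          push_neg at hcon
          have h1 : H s ≤ ((pI a : unitInterval) : ℝ) := le_trans hcon (le_coe_pI ha1)
          exact absurd ((hH_le (pI a) s hsmem).mp h1) (not_le.mpr hs.1)
        · exfalso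
          have h1 : pI a = 1 := pI_of_one_le ha1.le
          have h2 : ((r (pI a) : unitInterval) : ℝ) = ((r 1 : unitInterval) : ℝ) := by rw [h1]
          exact absurd hsmem.2 (not_le.mpr (h2 ▸ hs.1))
      · -- H s ≤ b
        rcases lt_or_ge b 0 with hb0 | hb0
        · exfalso
          have h1 : pI b = 0 := pI_of_nonpos hb0.le
          have h2 : ((r (pI b) : unitInterval) : ℝ) = ((r 0 : unitInterval) : ℝ) := by rw [h1]
          exact absurd hsmem.1 (not_le.mpr (h2 ▸ hs.2))
        · exact le_trans ((hH_le (pI b) s hsmem).mpr hs.2.le) (coe_pI_le hb0)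
    have hsand2 : H ⁻¹' (Set.Ioc a b) ∩ Set.Icc ((r 0 : unitInterval) : ℝ)
          ((r 1 : unitInterval) : ℝ)
        ⊆ Set.Icc ((r (pI a) : unitInterval) : ℝ) ((r (pI b) : unitInterval) : ℝ) := by
      rintro s ⟨hsH, hsmem⟩
      constructor
      · rcases lt_or_ge a 0 with ha0 | ha0
        · have h1 : pI a = 0 := pI_of_nonpos ha0.le
          rw [h1]
          exact hsmem.1
        · have ha1 : a < 1 := lt_of_lt_of_le hsH.1 (hH_mem s).2
          have h2 : ((pI a : unitInterval) : ℝ) = a := coe_pI_of_mem ha0 ha1.le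
          by_contra hcon
          push_neg at hcon
          have h3 : s ≤ ((r (pI a) : unitInterval) : ℝ) := hcon.le
          have h4 := (hH_le (pI a) s hsmem).mpr h3
          rw [h2] at h4
          exact absurd hsH.1 (not_lt.mpr h4)
      · rcases le_or_gt 1 b with hb1 | hb1
        · have h1 : pI b = 1 := pI_of_one_le hb1
          rw [h1]
          exact hsmem.2
        · have hb0 : 0 ≤ b := le_trans (hH_mem s).1 hsH.2
          have h2 : ((pI b : unitInterval) : ℝ) = b := coe_pI_of_mem hb0 hb1.le
          exact (hH_le (pI b) s hsmem).mp (by rw [h2]; exact hsH.2)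
    have hmIoo := st_measure_Ioo hmv hcv ((r (pI a) : unitInterval) : ℝ)
      ((r (pI b) : unitInterval) : ℝ)
    have hmIcc := st_measure_Icc hmv hcv ((r (pI a) : unitInterval) : ℝ)
      ((r (pI b) : unitInterval) : ℝ)
    have hmid : hmv.stieltjesFunction.measure (H ⁻¹' (Set.Ioc a b)
          ∩ Set.Icc ((r 0 : unitInterval) : ℝ) ((r 1 : unitInterval) : ℝ))
        = ENNReal.ofReal (pathVar β ((r (pI b) : unitInterval) : ℝ)
            - pathVar β ((r (pI a) : unitInterval) : ℝ)) :=
      le_antisymm (le_trans (measure_mono hsand2) hmIcc.le)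
        (le_trans hmIoo.ge (measure_mono hsand1))
    rw [hmid]
    congr 1
    linarith [pathVar_comp_mono hβ hr a, pathVar_comp_mono hβ hr b]
  -- now compare the integrals
  have hg_meas : Measurable fun t : ℝ => ρ ((β.comp r) (pI t)) :=
    hρ.comp ((β.comp r).continuous.comp pI_cont).measurable
  have hstep : pathIntegral ρ (β.comp r)
      = ∫⁻ s, ρ ((β.comp r) (pI (H s)))
          ∂(hmv.stieltjesFunction.measure.restrict
            (Set.Icc ((r 0 : unitInterval) : ℝ) ((r 1 : unitInterval) : ℝ))) := by
    rw [pathIntegral, lengthMeasure_eq hmw, hmap]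
    exact lintegral_map hg_meas hH_meas
  rw [hstep]
  have hcongr : ∫⁻ s, ρ ((β.comp r) (pI (H s)))
        ∂(hmv.stieltjesFunction.measure.restrict
          (Set.Icc ((r 0 : unitInterval) : ℝ) ((r 1 : unitInterval) : ℝ)))
      = ∫⁻ s, ρ (β (pI s))
        ∂(hmv.stieltjesFunction.measure.restrict
          (Set.Icc ((r 0 : unitInterval) : ℝ) ((r 1 : unitInterval) : ℝ))) := by
    apply lintegral_congr_ae
    filter_upwards [ae_restrict_mem measurableSet_Icc] with s hs
    have h1 : pI (H s) = e.symm (toI (Set.projIcc _ _ hu01 s)) := by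
      rw [hHdef]
      exact pI_coe _
    have h2 : r (pI (H s)) = pI s := by
      rw [h1]
      apply Subtype.ext
      have h3 : r (e.symm (toI (Set.projIcc _ _ hu01 s)))
          = ((e (e.symm (toI (Set.projIcc _ _ hu01 s))) : unitInterval)) := (he_apply _).symm
      rw [h3, OrderIso.apply_symm_apply]
      have h4 : ((toI (Set.projIcc _ _ hu01 s) : unitInterval) : ℝ) = s := by
        rw [htoI_coe, Set.projIcc_of_mem hu01 hs]
      rw [h4]
      have h5 : (0:ℝ) ≤ s := le_trans (r 0).2.1 hs.1
      have h6 : s ≤ 1 := le_trans hs.2 (r 1).2.2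
      rw [coe_pI_of_mem h5 h6]
    rw [ContinuousMap.comp_apply, h2]
  rw [hcongr, pathIntegral, lengthMeasure_eq hmv]
  exact lintegral_mono' Measure.restrict_le_self le_rfl

end Core


section CoreSymm
open Filter Topology MeasureTheory

variable [MeasurableSpace Z] [BorelSpace Z]

set_option linter.unusedSectionVars false

lemma pathVar_comp_symm {β : C(unitInterval, Z)} (hβ : pathLength β < ⊤) (t : ℝ) :
    pathVar β ((σ (pI t) : unitInterval) : ℝ) + pathVar (β.comp σm) t = pathVar β 1 := by
  have hc : pathVar (β.comp σm) t = (eVariationOn β (Set.Icc (σ (pI t)) 1)).toReal := by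
    rw [pathVar_eq, ContinuousMap.coe_comp,
      show (⇑σm : unitInterval → unitInterval) = unitInterval.symm from rfl,
      eVariationOn.comp_eq_of_antitoneOn (β : unitInterval → Z) unitInterval.symm
        (strictAnti_symm.antitone.antitoneOn _),
      symm_image_Icc, symm_zero]
  have h1 : pathVar β ((1 : unitInterval) : ℝ) = pathVar β 1 := by norm_num
  rw [hc, ← h1, pathVar_coe, pathVar_coe,
    ← ENNReal.toReal_add (evar_ne_top hβ _) (evar_ne_top hβ _),
    evar_Icc_add_Icc β nonneg' le_one']

lemma core_symm (β : C(unitInterval, Z)) (hβ : pathLength β < ⊤)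
    (ρ : Z → ℝ≥0∞) (hρ : Measurable ρ) :
    pathIntegral ρ (β.comp σm) ≤ pathIntegral ρ β := by
  have hβr : pathLength (β.comp σm) < ⊤ := by rw [pathLength_comp_symm]; exact hβ
  have hmv : Monotone (pathVar β) := pathVar_mono hβ
  have hmw : Monotone (pathVar (β.comp σm)) := pathVar_mono hβr
  have hcv : Continuous (pathVar β) := pathVar_continuous β hβ
  have hcw : Continuous (pathVar (β.comp σm)) := pathVar_continuous _ hβr
  set H : ℝ → ℝ := fun s => 1 - s with hHdef
  have hH_meas : Measurable H := measurable_const.sub measurable_id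
  -- finiteness
  have hSw_coe : ⇑hmw.stieltjesFunction = pathVar (β.comp σm) := stieltjes_apply hmw hcw
  have hw_bot : ∀ t : ℝ, t ≤ 0 → pathVar (β.comp σm) t = 0 := by
    intro t ht
    rw [pathVar_eq, pI_of_nonpos ht, Set.Icc_self,
      eVariationOn.subsingleton _ Set.subsingleton_singleton]
    rfl
  have htb : Tendsto (pathVar (β.comp σm)) atBot (nhds 0) := by
    apply Filter.Tendsto.congr' _ (tendsto_const_nhds (α := ℝ))
    filter_upwards [Filter.eventually_le_atBot (0:ℝ)] with t ht
    exact (hw_bot t ht).symm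
  have htt : Tendsto (pathVar (β.comp σm)) atTop (nhds (pathVar (β.comp σm) 1)) := by
    apply Filter.Tendsto.congr' _ (tendsto_const_nhds (α := ℝ))
    filter_upwards [Filter.eventually_ge_atTop (1:ℝ)] with t ht
    have heq1 : pathVar (β.comp σm) t = pathVar (β.comp σm) 1 := by
      rw [pathVar_eq, pathVar_eq, pI_of_one_le ht, pI_of_one_le le_rfl]
    exact heq1.symm
  haveI hWfin : IsFiniteMeasure hmw.stieltjesFunction.measure := by
    constructor
    rw [hmw.stieltjesFunction.measure_univ (l := 0) (u := pathVar (β.comp σm) 1)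
      (by rw [hSw_coe]; exact htb) (by rw [hSw_coe]; exact htt)]
    exact ENNReal.ofReal_lt_top
  have hmap : hmw.stieltjesFunction.measure
      = (hmv.stieltjesFunction.measure.restrict (Set.Icc (0:ℝ) 1)).map H := by
    refine Measure.ext_of_Ioc _ _ (fun a b hab => ?_)
    rw [st_measure_Ioc hmw hcw, Measure.map_apply hH_meas measurableSet_Ioc,
      Measure.restrict_apply (hH_meas measurableSet_Ioc)]
    have hsand1 : Set.Ioo ((σ (pI b) : unitInterval) : ℝ) ((σ (pI a) : unitInterval) : ℝ)
        ⊆ H ⁻¹' (Set.Ioc a b) ∩ Set.Icc (0:ℝ) 1 := by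
      intro s hs
      have hs1 : 1 - ((pI b : unitInterval) : ℝ) < s := by
        have := hs.1; rwa [coe_symm_eq] at this
      have hs2 : s < 1 - ((pI a : unitInterval) : ℝ) := by
        have := hs.2; rwa [coe_symm_eq] at this
      have hsmem : s ∈ Set.Icc (0:ℝ) 1 := by
        constructor
        · have h0 : (0:ℝ) ≤ 1 - ((pI b : unitInterval) : ℝ) := by
            have := (pI b).2.2; linarith
          linarith
        · have h0 : 1 - ((pI a : unitInterval) : ℝ) ≤ 1 := by
            have := (pI a).2.1; linarith
          linarith
      refine ⟨⟨?_, ?_⟩, hsmem⟩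
      · -- a < 1 - s
        show a < 1 - s
        rcases le_or_gt a 1 with ha1 | ha1
        · have := le_coe_pI ha1
          linarith
        · exfalso
          have h1 : pI a = 1 := pI_of_one_le ha1.le
          rw [h1] at hs2
          norm_num at hs2
          linarith [hsmem.1]
      · -- 1 - s ≤ b
        show 1 - s ≤ b
        rcases lt_or_ge b 0 with hb0 | hb0
        · exfalso
          have h1 : pI b = 0 := pI_of_nonpos hb0.le
          rw [h1] at hs1
          norm_num at hs1
          linarith [hsmem.2]
        · have := coe_pI_le hb0
          linarith
    have hsand2 : H ⁻¹' (Set.Ioc a b) ∩ Set.Icc (0:ℝ) 1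
        ⊆ Set.Icc ((σ (pI b) : unitInterval) : ℝ) ((σ (pI a) : unitInterval) : ℝ) := by
      rintro s ⟨hsH, hsmem⟩
      have hsH1 : a < 1 - s := hsH.1
      have hsH2 : 1 - s ≤ b := hsH.2
      constructor
      · rw [coe_symm_eq]
        rcases le_or_gt 1 b with hb1 | hb1
        · rw [pI_of_one_le hb1]
          norm_num
          exact hsmem.1
        · have hb0 : (0:ℝ) ≤ b := by linarith [hsmem.2]
          rw [coe_pI_of_mem hb0 hb1.le]
          linarith
      · rw [coe_symm_eq]
        rcases lt_or_ge a 0 with ha0 | ha0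
        · rw [pI_of_nonpos ha0.le]
          norm_num
          exact hsmem.2
        · have ha1 : a < 1 := by linarith [hsmem.1]
          rw [coe_pI_of_mem ha0 ha1.le]
          linarith
    have hmIoo := st_measure_Ioo hmv hcv ((σ (pI b) : unitInterval) : ℝ)
      ((σ (pI a) : unitInterval) : ℝ)
    have hmIcc := st_measure_Icc hmv hcv ((σ (pI b) : unitInterval) : ℝ)
      ((σ (pI a) : unitInterval) : ℝ)
    have hmid : hmv.stieltjesFunction.measure (H ⁻¹' (Set.Ioc a b) ∩ Set.Icc (0:ℝ) 1)
        = ENNReal.ofReal (pathVar β ((σ (pI a) : unitInterval) : ℝ)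
            - pathVar β ((σ (pI b) : unitInterval) : ℝ)) :=
      le_antisymm (le_trans (measure_mono hsand2) hmIcc.le)
        (le_trans hmIoo.ge (measure_mono hsand1))
    rw [hmid]
    congr 1
    linarith [pathVar_comp_symm hβ a, pathVar_comp_symm hβ b]
  have hg_meas : Measurable fun t : ℝ => ρ ((β.comp σm) (pI t)) :=
    hρ.comp ((β.comp σm).continuous.comp pI_cont).measurable
  have hstep : pathIntegral ρ (β.comp σm)
      = ∫⁻ s, ρ ((β.comp σm) (pI (H s)))
          ∂(hmv.stieltjesFunction.measure.restrict (Set.Icc (0:ℝ) 1)) := by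
    rw [pathIntegral, lengthMeasure_eq hmw, hmap]
    exact lintegral_map hg_meas hH_meas
  rw [hstep]
  have hcongr : ∫⁻ s, ρ ((β.comp σm) (pI (H s)))
        ∂(hmv.stieltjesFunction.measure.restrict (Set.Icc (0:ℝ) 1))
      = ∫⁻ s, ρ (β (pI s))
        ∂(hmv.stieltjesFunction.measure.restrict (Set.Icc (0:ℝ) 1)) := by
    apply lintegral_congr_ae
    filter_upwards [ae_restrict_mem measurableSet_Icc] with s hs
    have h2 : σ (pI (H s)) = pI s := by
      apply Subtype.ext
      rw [coe_symm_eq]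
      have h3 : (0:ℝ) ≤ 1 - s := by linarith [hs.2]
      have h4 : 1 - s ≤ 1 := by linarith [hs.1]
      rw [show H s = 1 - s from rfl, coe_pI_of_mem h3 h4, coe_pI_of_mem hs.1 hs.2]
      ring
    rw [ContinuousMap.comp_apply, show σm (pI (H s)) = σ (pI (H s)) from rfl, h2]
  rw [hcongr, pathIntegral, lengthMeasure_eq hmv]
  exact lintegral_mono' Measure.restrict_le_self le_rfl

lemma pathIntegral_comp_le (β : C(unitInterval, Z)) (hβ : pathLength β < ⊤)
    (r : C(unitInterval, unitInterval)) (hr : StrictMono ⇑r ∨ StrictAnti ⇑r)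
    (ρ : Z → ℝ≥0∞) (hρ : Measurable ρ) :
    pathIntegral ρ (β.comp r) ≤ pathIntegral ρ β := by
  cases hr with
  | inl h => exact core_mono β hβ r h ρ hρ
  | inr h =>
    have h2 : StrictMono ⇑(r.comp σm) := by
      rw [ContinuousMap.coe_comp, show (⇑σm : unitInterval → unitInterval) = unitInterval.symm
        from rfl]
      exact h.comp strictAnti_symm
    have hkey : β.comp r = (β.comp (r.comp σm)).comp σm := by
      ext t
      simp only [ContinuousMap.comp_apply]
      rw [show σm t = σ t from rfl, show σm (σ t) = σ (σ t) from rfl, symm_symm]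
    have hβ2 : pathLength (β.comp (r.comp σm)) < ⊤ :=
      lt_of_le_of_lt (pathLength_comp_mono β _ (Or.inl h2.monotone)) hβ
    rw [hkey]
    exact le_trans (core_symm (β.comp (r.comp σm)) hβ2 ρ hρ)
      (core_mono β hβ (r.comp σm) h2 ρ hρ)

end CoreSymm


section Main
open Filter Topology MeasureTheory

variable [MeasurableSpace Z] [BorelSpace Z]

set_option linter.unusedSectionVars false

lemma modulus_le_of_transfer {Q : ℝ} {μ : Measure Z} {Γ₁ Γ₂ : Set C(unitInterval, Z)}
    (h : ∀ ρ : Z → ℝ≥0∞, Measurable ρ → Admissible ρ Γ₂ → Admissible ρ Γ₁) :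
    modulus Q μ Γ₁ ≤ modulus Q μ Γ₂ := by
  unfold modulus
  refine le_iInf fun ρ => le_iInf fun hm => le_iInf fun ha => ?_
  exact iInf_le_of_le ρ (iInf_le_of_le hm (iInf_le_of_le (h ρ hm ha) le_rfl))

lemma dist_le_of_mem_uIcc {a b s : unitInterval} (h : s ∈ Set.uIcc a b) :
    dist s b ≤ dist a b := by
  rw [Subtype.dist_eq, Subtype.dist_eq, Real.dist_eq, Real.dist_eq]
  rcases Set.mem_uIcc.mp h with ⟨h1, h2⟩ | ⟨h1, h2⟩
  · have c1 : (a:ℝ) ≤ s := Subtype.coe_le_coe.mpr h1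
    have c2 : (s:ℝ) ≤ b := Subtype.coe_le_coe.mpr h2
    rw [abs_of_nonpos (by linarith), abs_of_nonpos (by linarith)]
    linarith
  · have c1 : (b:ℝ) ≤ s := Subtype.coe_le_coe.mpr h1
    have c2 : (s:ℝ) ≤ a := Subtype.coe_le_coe.mpr h2
    rw [abs_of_nonneg (by linarith), abs_of_nonneg (by linarith)]
    linarith

lemma exists_good_interval (γ : C(unitInterval, Z)) (hγ : Nonconstant γ) (c : unitInterval)
    {ε : ℝ} (hε : 0 < ε) :
    ∃ u v : unitInterval, u < v ∧ (∀ t ∈ Set.Icc u v, dist (γ t) (γ c) < ε) ∧ γ u ≠ γ v := by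
  by_contra hcon
  push_neg at hcon
  set U : Set unitInterval := {t | dist (γ t) (γ c) < ε} with hU
  have hUopen : IsOpen U := isOpen_lt (γ.continuous.dist continuous_const) continuous_const
  set A : Set unitInterval := {t | Set.uIcc t c ⊆ U} with hA
  have hcU : c ∈ U := by
    simp only [hU, Set.mem_setOf_eq, dist_self]
    exact hε
  have hcA : c ∈ A := by
    intro s hs
    rw [Set.uIcc_self, Set.mem_singleton_iff] at hs
    rw [hs]
    exact hcU
  have hAz : ∀ t ∈ A, γ t = γ c := by
    intro t ht
    rcases lt_trichotomy t c with h | h | h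
    · exact hcon t c h (fun s hs => ht (by rwa [Set.uIcc_of_le h.le]))
    · rw [h]
    · exact (hcon c t h (fun s hs => ht (by rwa [Set.uIcc_of_ge h.le]))).symm
  have hAopen : IsOpen A := by
    rw [Metric.isOpen_iff]
    intro t ht
    obtain ⟨δ, hδ, hball⟩ := Metric.isOpen_iff.mp hUopen t (ht Set.left_mem_uIcc)
    refine ⟨δ, hδ, fun t' ht' => ?_⟩
    intro s hs
    rcases Set.uIcc_subset_uIcc_union_uIcc (a := t') (b := t) (c := c) hs with h | h
    · apply hball
      rw [Metric.mem_ball]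
      calc dist s t ≤ dist t' t := dist_le_of_mem_uIcc h
        _ < δ := Metric.mem_ball.mp ht'
    · exact ht h
  have hAclosed : IsClosed A := by
    apply isClosed_of_closure_subset
    intro t ht s hs
    rcases eq_or_ne s t with rfl | hst
    · have heq : Set.EqOn (⇑γ) (fun _ => γ c) A := fun x hx => hAz x hx
      have htc : γ s = γ c := heq.closure γ.continuous continuous_const ht
      show s ∈ U
      simp only [hU, Set.mem_setOf_eq, htc, dist_self]
      exact hε
    · rcases Set.mem_uIcc.mp hs with ⟨h1, h2⟩ | ⟨h1, h2⟩
      · have hts : t < s := lt_of_le_of_ne h1 (Ne.symm hst)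
        have hd : (0:ℝ) < (s:ℝ) - t := by
          have := Subtype.coe_lt_coe.mpr hts
          linarith
        obtain ⟨t', ht'A, ht'd⟩ := Metric.mem_closure_iff.mp ht ((s:ℝ) - t) hd
        have h3 : (t':ℝ) < s := by
          rw [Subtype.dist_eq, Real.dist_eq] at ht'd
          have := abs_lt.mp ht'd
          linarith [this.1, this.2]
        apply ht'A
        rw [Set.mem_uIcc]
        exact Or.inl ⟨Subtype.coe_le_coe.mp h3.le, h2⟩
      · have hts : s < t := lt_of_le_of_ne h2 hst
        have hd : (0:ℝ) < (t:ℝ) - s := by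
          have := Subtype.coe_lt_coe.mpr hts
          linarith
        obtain ⟨t', ht'A, ht'd⟩ := Metric.mem_closure_iff.mp ht ((t:ℝ) - s) hd
        have h3 : (s:ℝ) < t' := by
          rw [Subtype.dist_eq, Real.dist_eq] at ht'd
          have := abs_lt.mp ht'd
          linarith [this.1, this.2]
        apply ht'A
        rw [Set.mem_uIcc]
        exact Or.inr ⟨h1, Subtype.coe_le_coe.mp h3.le⟩
  have hAuniv : A = Set.univ := (IsClopen.eq_univ ⟨hAclosed, hAopen⟩) ⟨c, hcA⟩
  obtain ⟨s, t, hst⟩ := hγ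
  refine hst ?_
  rw [hAz s (hAuniv ▸ Set.mem_univ s), hAz t (hAuniv ▸ Set.mem_univ t)]

end Main

end ThickAux


end AuxThick

theorem isThick_comp_embedding
    {Z : Type*} [MetricSpace Z] [LocallyCompactSpace Z] [TopologicalSpace.SeparableSpace Z]
    [MeasurableSpace Z] [BorelSpace Z]
    (μ : Measure Z) [IsLocallyFiniteMeasure μ]
    (hsupp : ∀ (z : Z) (r : ℝ), 0 < r → 0 < μ (Metric.ball z r))
    {Q : ℝ} (hQ : 1 ≤ Q)
    (γ : C(unitInterval, Z)) (hthick : IsThick Q μ γ)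
    (α : unitInterval → unitInterval) (hαc : Continuous α) (hαinj : Function.Injective α)
    : IsThick Q μ (γ.comp ⟨α, hαc⟩) := by
  haveI : Fact ((0:ℝ) ≤ 1) := ⟨zero_le_one⟩
  have hαm : StrictMono α ∨ StrictAnti α := hαc.strictMono_of_inj_boundedOrder' hαinj
  set αm : C(unitInterval, unitInterval) := ⟨α, hαc⟩ with hαmdef
  by_cases hnc : Nonconstant (γ.comp αm)
  · -- Case A : γ ∘ α is nonconstant
    intro ε hε
    obtain ⟨s₀, t₀, hst⟩ := hnc
    have hD : 0 < dist ((γ.comp αm) s₀) ((γ.comp αm) t₀) := dist_pos.mpr hst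
    set D := dist ((γ.comp αm) s₀) ((γ.comp αm) t₀) with hDdef
    have hδpos : 0 < min ε (D / 3) := lt_min hε (by linarith)
    refine lt_of_lt_of_le (hthick _ hδpos) (ThickAux.modulus_le_of_transfer ?_)
    intro ρ hρ hadm β hβmem hβlen
    have hdβγ : dist β γ < min ε (D / 3) := Metric.mem_ball.mp hβmem.1
    have h1 : β.comp αm ∈ Metric.ball (γ.comp αm) ε := by
      rw [Metric.mem_ball, ContinuousMap.dist_lt_iff hε]
      intro x
      calc dist ((β.comp αm) x) ((γ.comp αm) x) = dist (β (αm x)) (γ (αm x)) := rfl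
        _ ≤ dist β γ := ContinuousMap.dist_apply_le_dist _
        _ < min ε (D / 3) := hdβγ
        _ ≤ ε := min_le_left _ _
    have h2 : Nonconstant (β.comp αm) := by
      refine ⟨s₀, t₀, fun hconst => ?_⟩
      have e1 := dist_triangle4 ((γ.comp αm) s₀) ((β.comp αm) s₀) ((β.comp αm) t₀)
        ((γ.comp αm) t₀)
      have e2 : dist ((γ.comp αm) s₀) ((β.comp αm) s₀) < min ε (D / 3) := by
        rw [dist_comm]
        exact lt_of_le_of_lt (ContinuousMap.dist_apply_le_dist (αm s₀)) hdβγ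
      have e3 : dist ((β.comp αm) t₀) ((γ.comp αm) t₀) < min ε (D / 3) :=
        lt_of_le_of_lt (ContinuousMap.dist_apply_le_dist (αm t₀)) hdβγ
      rw [hconst, dist_self, ← hDdef] at e1
      rw [hconst] at e2
      have hm3 : min ε (D / 3) ≤ D / 3 := min_le_right _ _
      linarith
    have h3 : pathLength (β.comp αm) < ⊤ :=
      lt_of_le_of_lt
        (ThickAux.pathLength_comp_mono β αm (hαm.imp StrictMono.monotone StrictAnti.antitone))
        hβlen
    exact le_trans (hadm (β.comp αm) ⟨h1, h2⟩ h3)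
      (ThickAux.pathIntegral_comp_le β hβlen αm hαm ρ hρ)
  · -- Case B : γ ∘ α is constant
    unfold Nonconstant at hnc
    push_neg at hnc
    by_cases hγnc : Nonconstant γ
    · -- B2 : γ itself is nonconstant
      intro ε hε
      obtain ⟨u, v, huv, hU, hne⟩ := ThickAux.exists_good_interval γ hγnc (αm 0) (half_pos hε)
      have hD : 0 < dist (γ u) (γ v) := dist_pos.mpr hne
      set D := dist (γ u) (γ v) with hDdef
      have hδpos : 0 < min (ε / 2) (D / 3) := lt_min (half_pos hε) (by linarith)
      have huv' : (u:ℝ) < v := Subtype.coe_lt_coe.mpr huv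
      have hmem_rm : ∀ t : unitInterval,
          ((1 - (t:ℝ)) * (u:ℝ) + (t:ℝ) * (v:ℝ)) ∈ Set.Icc (0:ℝ) 1 := by
        intro t
        constructor
        · nlinarith [t.2.1, t.2.2, u.2.1, v.2.1]
        · nlinarith [t.2.1, t.2.2, u.2.2, v.2.2]
      set rmap : C(unitInterval, unitInterval) :=
        ⟨fun t => ⟨(1 - (t:ℝ)) * (u:ℝ) + (t:ℝ) * (v:ℝ), hmem_rm t⟩, by
          apply Continuous.subtype_mk
          exact ((continuous_const.sub continuous_subtype_val).mul continuous_const).add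
            (continuous_subtype_val.mul continuous_const)⟩ with hrmap
      have hrm_mono : StrictMono ⇑rmap := by
        intro a b hab
        have hab' : (a:ℝ) < b := Subtype.coe_lt_coe.mpr hab
        rw [show rmap a = ⟨(1 - (a:ℝ)) * (u:ℝ) + (a:ℝ) * (v:ℝ), hmem_rm a⟩ from rfl,
          show rmap b = ⟨(1 - (b:ℝ)) * (u:ℝ) + (b:ℝ) * (v:ℝ), hmem_rm b⟩ from rfl,
          Subtype.mk_lt_mk]
        nlinarith
      have hrm0 : rmap 0 = u := by
        apply Subtype.ext
        show (1 - ((0:unitInterval):ℝ)) * (u:ℝ) + ((0:unitInterval):ℝ) * (v:ℝ) = (u:ℝ)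
        norm_num
      have hrm1 : rmap 1 = v := by
        apply Subtype.ext
        show (1 - ((1:unitInterval):ℝ)) * (u:ℝ) + ((1:unitInterval):ℝ) * (v:ℝ) = (v:ℝ)
        norm_num
      have hrmmem : ∀ x : unitInterval, rmap x ∈ Set.Icc u v := by
        intro x
        constructor
        · rw [← hrm0]; exact hrm_mono.monotone unitInterval.nonneg'
        · rw [← hrm1]; exact hrm_mono.monotone unitInterval.le_one'
      refine lt_of_lt_of_le (hthick _ hδpos) (ThickAux.modulus_le_of_transfer ?_)
      intro ρ hρ hadm β hβmem hβlen
      have hdβγ : dist β γ < min (ε / 2) (D / 3) := Metric.mem_ball.mp hβmem.1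
      have h1 : β.comp rmap ∈ Metric.ball (γ.comp αm) ε := by
        rw [Metric.mem_ball, ContinuousMap.dist_lt_iff hε]
        intro x
        have e0 : (γ.comp αm) x = γ (αm 0) := hnc x 0
        calc dist ((β.comp rmap) x) ((γ.comp αm) x) = dist (β (rmap x)) (γ (αm 0)) := by
              rw [e0]; rfl
          _ ≤ dist (β (rmap x)) (γ (rmap x)) + dist (γ (rmap x)) (γ (αm 0)) :=
              dist_triangle _ _ _
          _ < min (ε / 2) (D / 3) + ε / 2 :=
              add_lt_add (lt_of_le_of_lt (ContinuousMap.dist_apply_le_dist (rmap x)) hdβγ)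
                (hU _ (hrmmem x))
          _ ≤ ε := by
              have := min_le_left (ε / 2) (D / 3)
              linarith
      have h2 : Nonconstant (β.comp rmap) := by
        refine ⟨0, 1, fun hconst => ?_⟩
        have hc0 : (β.comp rmap) 0 = β u := by rw [ContinuousMap.comp_apply, hrm0]
        have hc1 : (β.comp rmap) 1 = β v := by rw [ContinuousMap.comp_apply, hrm1]
        rw [hc0, hc1] at hconst
        have e1 := dist_triangle4 (γ u) (β u) (β v) (γ v)
        have e2 : dist (γ u) (β u) < min (ε / 2) (D / 3) := by
          rw [dist_comm]
          exact lt_of_le_of_lt (ContinuousMap.dist_apply_le_dist u) hdβγ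
        have e3 : dist (β v) (γ v) < min (ε / 2) (D / 3) :=
          lt_of_le_of_lt (ContinuousMap.dist_apply_le_dist v) hdβγ
        rw [hconst, dist_self, ← hDdef] at e1
        rw [hconst] at e2
        have hm3 : min (ε / 2) (D / 3) ≤ D / 3 := min_le_right _ _
        linarith
      have h3 : pathLength (β.comp rmap) < ⊤ :=
        lt_of_le_of_lt (ThickAux.pathLength_comp_mono β rmap (Or.inl hrm_mono.monotone)) hβlen
      exact le_trans (hadm (β.comp rmap) ⟨h1, h2⟩ h3)
        (ThickAux.pathIntegral_comp_le β hβlen rmap (Or.inl hrm_mono) ρ hρ)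
    · -- B1 : γ is constant
      unfold Nonconstant at hγnc
      push_neg at hγnc
      have hEq : γ.comp αm = γ := ContinuousMap.ext fun t => hγnc (αm t) t
      rw [hEq]
      exact hthick
end

section
/- Let (Z,d,μ) be a separable locally compact metric measure space and Q ≥ 1. The family P_t of nonconstant paths in P = C([0,1],Z) which are not thick has zero Q-modulus. In particular, for any family Γ ⊆ P of nonconstant paths, Mod_Q(Γ ∩ P_T) = Mod_Q(Γ), where P_T is the set of thick paths. -/
open Metric Set MeasureTheory Filter Topology unitInterval
open scoped NNReal ENNReal

/-! A nonconstant path that is not thick has a ball around it in which the nonconstant paths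
form a modulus-null family. The path space `C([0,1], Z)` is second countable, so countably many
of these balls cover all such paths (Lindelöf), and the modulus is countably subadditive. -/

section Modulus

variable {Z : Type*} [MetricSpace Z]

lemma Admissible.mono {ρ ρ' : Z → ℝ≥0∞} {Γ Γ' : Set C(unitInterval, Z)}
    (h : Admissible ρ Γ') (hΓ : Γ ⊆ Γ') (hρ : ρ ≤ ρ') : Admissible ρ' Γ :=
  fun γ hγ hfin => (h γ (hΓ hγ) hfin).trans (lintegral_mono fun _ => hρ _)

variable [MeasurableSpace Z] {μ : Measure Z} {Q : ℝ}

lemma modulus_le_lintegral {Γ : Set C(unitInterval, Z)} {ρ : Z → ℝ≥0∞}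
    (hm : Measurable ρ) (ha : Admissible ρ Γ) : modulus Q μ Γ ≤ ∫⁻ z, ρ z ^ Q ∂μ :=
  iInf₂_le_of_le ρ hm (iInf_le _ ha)

lemma exists_admissible_lintegral_lt {Γ : Set C(unitInterval, Z)} {c : ℝ≥0∞}
    (h : modulus Q μ Γ < c) :
    ∃ ρ : Z → ℝ≥0∞, Measurable ρ ∧ Admissible ρ Γ ∧ ∫⁻ z, ρ z ^ Q ∂μ < c := by
  simpa only [modulus, iInf_lt_iff, exists_prop] using h

lemma modulus_mono {Γ Γ' : Set C(unitInterval, Z)} (h : Γ ⊆ Γ') :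
    modulus Q μ Γ ≤ modulus Q μ Γ' :=
  le_iInf₂ fun _ hm => le_iInf fun ha => modulus_le_lintegral hm (ha.mono h le_rfl)

/-- The density `(∑ ρᵢ ^ Q) ^ (1 / Q)` dominates every `ρᵢ` and has `Q`-energy `∑ ∫ ρᵢ ^ Q`. -/
lemma modulus_iUnion_le_tsum_lintegral (hQ : 0 < Q) {ι : Type*} [Countable ι]
    {Γ : ι → Set C(unitInterval, Z)} {ρ : ι → Z → ℝ≥0∞} (hm : ∀ i, Measurable (ρ i))
    (ha : ∀ i, Admissible (ρ i) (Γ i)) :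
    modulus Q μ (⋃ i, Γ i) ≤ ∑' i, ∫⁻ z, ρ i z ^ Q ∂μ := by
  set g : Z → ℝ≥0∞ := fun z => ∑' i, ρ i z ^ Q
  have hgm : Measurable g := Measurable.tsum fun i => (hm i).pow_const Q
  have hle : ∀ i, ρ i ≤ fun z => g z ^ Q⁻¹ := fun i z => by
    calc ρ i z = (ρ i z ^ Q) ^ Q⁻¹ := (ENNReal.rpow_rpow_inv hQ.ne' _).symm
      _ ≤ g z ^ Q⁻¹ := ENNReal.rpow_le_rpow (ENNReal.le_tsum i) (inv_nonneg.2 hQ.le)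
  have hadm : Admissible (fun z => g z ^ Q⁻¹) (⋃ i, Γ i) := fun γ hγ => by
    obtain ⟨i, hi⟩ := mem_iUnion.1 hγ
    exact (ha i).mono (singleton_subset_iff.2 hi) (hle i) γ rfl
  calc modulus Q μ (⋃ i, Γ i) ≤ ∫⁻ z, (g z ^ Q⁻¹) ^ Q ∂μ :=
        modulus_le_lintegral (hgm.pow_const _) hadm
    _ = ∫⁻ z, g z ∂μ := by simp only [ENNReal.rpow_inv_rpow hQ.ne']
    _ = ∑' i, ∫⁻ z, ρ i z ^ Q ∂μ := lintegral_tsum fun i => ((hm i).pow_const Q).aemeasurable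

lemma modulus_iUnion_le (hQ : 0 < Q) {ι : Type*} [Countable ι]
    (Γ : ι → Set C(unitInterval, Z)) :
    modulus Q μ (⋃ i, Γ i) ≤ ∑' i, modulus Q μ (Γ i) := by
  refine ENNReal.le_of_forall_pos_le_add fun ε hε hfin => ?_
  obtain ⟨δ, hδ, hδsum⟩ :=
    ENNReal.exists_pos_sum_of_countable' (ENNReal.coe_ne_zero.2 hε.ne') ι
  have hΓfin : ∀ i, modulus Q μ (Γ i) ≠ ⊤ := fun i =>
    ne_top_of_le_ne_top hfin.ne (ENNReal.le_tsum i)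
  choose ρ hm ha hlt using fun i =>
    exists_admissible_lintegral_lt (ENNReal.lt_add_right (hΓfin i) (hδ i).ne')
  calc modulus Q μ (⋃ i, Γ i) ≤ ∑' i, ∫⁻ z, ρ i z ^ Q ∂μ :=
        modulus_iUnion_le_tsum_lintegral hQ hm ha
    _ ≤ ∑' i, (modulus Q μ (Γ i) + δ i) := ENNReal.tsum_le_tsum fun i => (hlt i).le
    _ ≤ ∑' i, modulus Q μ (Γ i) + ε := by rw [ENNReal.tsum_add]; gcongr

lemma modulus_union_le (hQ : 0 < Q) (Γ Γ' : Set C(unitInterval, Z)) :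
    modulus Q μ (Γ ∪ Γ') ≤ modulus Q μ Γ + modulus Q μ Γ' := by
  simpa only [union_eq_iUnion, tsum_bool, cond_false, cond_true, add_comm]
    using modulus_iUnion_le (μ := μ) hQ fun b => bif b then Γ else Γ'

lemma modulus_eq_zero_of_forall_nhdsWithin [SecondCountableTopology Z] (hQ : 0 < Q)
    {S : Set C(unitInterval, Z)} (h : ∀ γ ∈ S, ∃ U ∈ 𝓝[S] γ, modulus Q μ U = 0) :
    modulus Q μ S = 0 := by
  choose! U hU hU0 using h
  obtain ⟨T, hTS, hTc, hcover⟩ := TopologicalSpace.countable_cover_nhdsWithin hU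
  have := hTc.to_subtype
  refine nonpos_iff_eq_zero.1 ?_
  calc modulus Q μ S ≤ modulus Q μ (⋃ γ : T, U γ) :=
        modulus_mono (biUnion_eq_iUnion T (fun γ _ => U γ) ▸ hcover)
    _ ≤ ∑' γ : T, modulus Q μ (U γ) := modulus_iUnion_le hQ _
    _ = 0 := ENNReal.tsum_eq_zero.2 fun γ => hU0 γ (hTS γ.2)

lemma modulus_setOf_nonconstant_not_isThick_eq_zero [SecondCountableTopology Z] (hQ : 0 < Q) :
    modulus Q μ {γ : C(unitInterval, Z) | Nonconstant γ ∧ ¬ IsThick Q μ γ} = 0 := by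
  refine modulus_eq_zero_of_forall_nhdsWithin hQ fun γ ⟨_, hγ⟩ => ?_
  obtain ⟨ε, hε, hnull⟩ : ∃ ε, 0 < ε ∧
      modulus Q μ {α | α ∈ ball γ ε ∧ Nonconstant α} ≤ 0 := by
    simpa only [IsThick, not_forall, not_lt, exists_prop] using hγ
  refine ⟨_, mem_nhdsWithin.2 ⟨ball γ ε, isOpen_ball, mem_ball_self hε, ?_⟩,
    nonpos_iff_eq_zero.1 hnull⟩
  exact fun α ⟨hα, hαP⟩ => ⟨hα, hαP.1⟩

end Modulus

theorem modulus_nonthick_zero_general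
    {Z : Type*} [MetricSpace Z] [TopologicalSpace.SeparableSpace Z]
    [MeasurableSpace Z]
    (μ : Measure Z)
    {Q : ℝ} (hQ : 1 ≤ Q)
    : modulus Q μ {γ : C(unitInterval, Z) | Nonconstant γ ∧ ¬ IsThick Q μ γ} = 0 ∧
      ∀ Γ : Set C(unitInterval, Z), (∀ γ ∈ Γ, Nonconstant γ) →
        modulus Q μ {γ ∈ Γ | IsThick Q μ γ} = modulus Q μ Γ := by
  have : SecondCountableTopology Z := UniformSpace.secondCountable_of_separable Z
  have hQ₀ : 0 < Q := zero_lt_one.trans_le hQ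
  have hnull := modulus_setOf_nonconstant_not_isThick_eq_zero (μ := μ) hQ₀
  refine ⟨hnull, fun Γ hΓ => le_antisymm (modulus_mono (sep_subset _ _)) ?_⟩
  have hsplit : Γ ⊆ {γ ∈ Γ | IsThick Q μ γ} ∪
      {γ : C(unitInterval, Z) | Nonconstant γ ∧ ¬ IsThick Q μ γ} := fun γ hγ =>
    (em (IsThick Q μ γ)).imp (fun h => ⟨hγ, h⟩) (fun h => ⟨hΓ γ hγ, h⟩)
  calc modulus Q μ Γ ≤ _ := modulus_mono hsplit
    _ ≤ _ := modulus_union_le hQ₀ _ _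
    _ = modulus Q μ {γ ∈ Γ | IsThick Q μ γ} := by rw [hnull, add_zero]

theorem modulus_nonthick_zero
    {Z : Type*} [MetricSpace Z] [LocallyCompactSpace Z] [TopologicalSpace.SeparableSpace Z]
    [MeasurableSpace Z] [BorelSpace Z]
    (μ : Measure Z) [IsLocallyFiniteMeasure μ]
    (hsupp : ∀ (z : Z) (r : ℝ), 0 < r → 0 < μ (Metric.ball z r))
    {Q : ℝ} (hQ : 1 ≤ Q)
    : modulus Q μ {γ : C(unitInterval, Z) | Nonconstant γ ∧ ¬ IsThick Q μ γ} = 0 ∧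
      ∀ Γ : Set C(unitInterval, Z), (∀ γ ∈ Γ, Nonconstant γ) →
        modulus Q μ {γ ∈ Γ | IsThick Q μ γ} = modulus Q μ Γ :=
  modulus_nonthick_zero_general μ hQ
end
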